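/- arXiv:2504.03950 — 8 statements merged into one kernel-verified Lean document; each statement's English description precedes it below -/
import Mathlib

section
/- Let s ≥ 2 be an integer and suppose there are positive constants c, C such that c·m^{2−1/s} ≤ z(m; s) ≤ C·m^{2−1/s} for all sufficiently large m. Then for all sufficiently large N there exists a bipartite graph H with parts of size N that contains no K_{s,s} and has minimum degree δ(H) ≥ (c/8)·(c/(2C))^{1/(s−1)}·N^{1−1/s}. -/
/-!
Let `δ = (c/8)(c/2C)^{1/(s-1)}`, which is at most `c/8` because the two bounds on `z` force
`c ≤ C`, and let `t = ⌈δ N^{1-1/s}⌉`. Since `N^{1-1/s} → ∞`, an extremal `K_{s,s}`-free graph has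
`z(N; s) ≥ 6tN` edges for large `N`. Deleting the edges at vertices of positive degree below `2t`
costs at most `4tN` edges and leaves a graph whose non-isolated vertices have degree at least
`2t`. While some left vertex `x` is isolated, pigeonhole gives a left vertex of degree at least
`2t`, and moving `t` of its edges to `x` splits that vertex in two: this creates no `K_{s,s}` and
changes no right degree. Doing the same on the right gives minimum degree `t` on both sides.
-/

/-- A bipartite graph, given by its adjacency relation between parts `Fin n` and `Fin n`,
contains no `K_{s,s}`. -/
def KssFree {n : ℕ} (s : ℕ) (R : Fin n → Fin n → Prop) : Prop :=
  ¬ ∃ (S T : Finset (Fin n)), S.card = s ∧ T.card = s ∧ ∀ a ∈ S, ∀ b ∈ T, R a b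

/-- The Zarankiewicz number `z(n; s)`: the maximum number of edges in a bipartite graph
with parts of size `n` containing no `K_{s,s}`. -/
noncomputable def zar (n s : ℕ) : ℕ :=
  sSup {e | ∃ R : Fin n → Fin n → Prop, KssFree s R ∧
    e = ({p : Fin n × Fin n | R p.1 p.2}).ncard}

open Finset

namespace Zarankiewicz

variable {α β : Type*} {s t : ℕ}

def IsKssFree (s : ℕ) (E : Finset (α × β)) : Prop :=
  ¬ ∃ (S : Finset α) (T : Finset β), #S = s ∧ #T = s ∧ S ×ˢ T ⊆ E

lemma IsKssFree.ne_zero {E : Finset (α × β)} (hE : IsKssFree s E) : s ≠ 0 := by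
  rintro rfl
  exact hE ⟨∅, ∅, rfl, rfl, by simp⟩

lemma IsKssFree.mono {E F : Finset (α × β)} (hF : IsKssFree s F) (h : E ⊆ F) :
    IsKssFree s E :=
  fun ⟨S, T, hS, hT, hST⟩ => hF ⟨S, T, hS, hT, hST.trans h⟩

def leftDeg [DecidableEq α] (E : Finset (α × β)) (a : α) : ℕ := #{p ∈ E | p.1 = a}

def rightDeg [DecidableEq β] (E : Finset (α × β)) (b : β) : ℕ := #{p ∈ E | p.2 = b}

lemma leftDeg_ne_zero_iff [DecidableEq α] {E : Finset (α × β)} {a : α} :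
    leftDeg E a ≠ 0 ↔ a ∈ E.image Prod.fst :=
  card_ne_zero.trans fiber_nonempty_iff_mem_image

lemma rightDeg_ne_zero_iff [DecidableEq β] {E : Finset (α × β)} {b : β} :
    rightDeg E b ≠ 0 ↔ b ∈ E.image Prod.snd :=
  card_ne_zero.trans fiber_nonempty_iff_mem_image

lemma card_image_filter_ne_lt {ι γ : Type*} [DecidableEq γ] (f : ι → γ) {E : Finset ι} {v : γ}
    (hv : v ∈ E.image f) : #({i ∈ E | f i ≠ v}.image f) < #(E.image f) := by
  refine card_lt_card ((ssubset_iff_of_subset (image_subset_image (filter_subset _ _))).2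
    ⟨v, hv, ?_⟩)
  simp

variable [DecidableEq α] [DecidableEq β]

lemma IsKssFree.image_swap {E : Finset (α × β)} (hE : IsKssFree s E) :
    IsKssFree s (E.image Prod.swap) := by
  rintro ⟨S, T, hS, hT, hST⟩
  refine hE ⟨T, S, hT, hS, ?_⟩
  simpa [image_image] using image_subset_image (f := Prod.swap) hST

lemma leftDeg_image_swap (E : Finset (α × β)) (b : β) :
    leftDeg (E.image Prod.swap) b = rightDeg E b := by
  rw [leftDeg, filter_image, card_image_of_injective _ Prod.swap_injective, rightDeg]
  rfl

lemma rightDeg_image_swap (E : Finset (α × β)) (a : α) :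
    rightDeg (E.image Prod.swap) a = leftDeg E a := by
  rw [rightDeg, filter_image, card_image_of_injective _ Prod.swap_injective, leftDeg]
  rfl

def moveEdges (M : Finset (α × β)) (x : α) (p : α × β) : α × β :=
  if p ∈ M then (x, p.2) else p

section moveEdges

variable {E M : Finset (α × β)} {x h : α}

lemma moveEdges_snd (p : α × β) : (moveEdges M x p).2 = p.2 := by
  unfold moveEdges; split_ifs <;> rfl

lemma mem_image_moveEdges (hx : ∀ p ∈ E, p.1 ≠ x) (hM : M ⊆ {p ∈ E | p.1 = h}) {a : α} {b : β} :
    (a, b) ∈ E.image (moveEdges M x) ↔ (a = x ∧ (h, b) ∈ M) ∨ ((a, b) ∈ E ∧ (a, b) ∉ M) := by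
  constructor
  · rintro hab
    obtain ⟨p, hp, hpab⟩ := mem_image.1 hab
    unfold moveEdges at hpab
    split_ifs at hpab with hpM
    · obtain ⟨-, hph⟩ := mem_filter.1 (hM hpM)
      obtain ⟨rfl, rfl⟩ := Prod.mk.inj hpab
      exact Or.inl ⟨rfl, hph ▸ hpM⟩
    · exact Or.inr ⟨hpab ▸ hp, hpab ▸ hpM⟩
  · rintro (⟨rfl, hbM⟩ | ⟨habE, habM⟩)
    · exact mem_image.2 ⟨(h, b), (mem_filter.1 (hM hbM)).1, by simp [moveEdges, hbM]⟩
    · exact mem_image.2 ⟨(a, b), habE, by simp [moveEdges, habM]⟩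

lemma injOn_moveEdges (hx : ∀ p ∈ E, p.1 ≠ x) (hM : M ⊆ {p ∈ E | p.1 = h}) :
    Set.InjOn (moveEdges M x) E := by
  intro p hp q hq hpq
  unfold moveEdges at hpq
  split_ifs at hpq with hpM hqM hqM
  · have hp1 := (mem_filter.1 (hM hpM)).2
    have hq1 := (mem_filter.1 (hM hqM)).2
    exact Prod.ext (hp1.trans hq1.symm) (Prod.mk.inj hpq).2
  · exact absurd (congrArg Prod.fst hpq).symm (hx q hq)
  · exact absurd (congrArg Prod.fst hpq) (hx p hp)
  · exact hpq

lemma card_image_moveEdges (hx : ∀ p ∈ E, p.1 ≠ x) (hM : M ⊆ {p ∈ E | p.1 = h}) :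
    #(E.image (moveEdges M x)) = #E :=
  card_image_of_injOn (injOn_moveEdges hx hM)

lemma rightDeg_image_moveEdges (hx : ∀ p ∈ E, p.1 ≠ x) (hM : M ⊆ {p ∈ E | p.1 = h}) (b : β) :
    rightDeg (E.image (moveEdges M x)) b = rightDeg E b := by
  rw [rightDeg, filter_image,
    card_image_of_injOn ((injOn_moveEdges hx hM).mono (coe_subset.2 (filter_subset _ _)))]
  simp only [moveEdges_snd, rightDeg]

lemma leftDeg_image_moveEdges (hx : ∀ p ∈ E, p.1 ≠ x) (hM : M ⊆ {p ∈ E | p.1 = h}) (a : α) :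
    leftDeg (E.image (moveEdges M x)) a = #{p ∈ E | (moveEdges M x p).1 = a} := by
  rw [leftDeg, filter_image,
    card_image_of_injOn ((injOn_moveEdges hx hM).mono (coe_subset.2 (filter_subset _ _)))]

lemma leftDeg_image_moveEdges_self (hx : ∀ p ∈ E, p.1 ≠ x) (hM : M ⊆ {p ∈ E | p.1 = h}) :
    leftDeg (E.image (moveEdges M x)) x = #M := by
  rw [leftDeg_image_moveEdges hx hM]
  congr 1
  ext p
  rw [mem_filter]
  by_cases hpM : p ∈ M
  · simp [moveEdges, hpM, (mem_filter.1 (hM hpM)).1]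
  · simpa [moveEdges, hpM] using hx p

lemma leftDeg_image_moveEdges_of_ne (hx : ∀ p ∈ E, p.1 ≠ x) (hM : M ⊆ {p ∈ E | p.1 = h})
    {a : α} (hax : a ≠ x) :
    leftDeg (E.image (moveEdges M x)) a = #({p ∈ E | p.1 = a} \ M) := by
  rw [leftDeg_image_moveEdges hx hM]
  congr 1
  ext p
  rw [mem_filter, mem_sdiff, mem_filter]
  by_cases hpM : p ∈ M
  · simp [moveEdges, hpM, hax.symm]
  · simp [moveEdges, hpM]

/-- A copy of `K_{s,s}` after the move gives one before it, by sending `x` back to `h`: it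
cannot use both `x` and `h`, whose new neighbourhoods are disjoint. -/
lemma IsKssFree.image_moveEdges (hE : IsKssFree s E) (hx : ∀ p ∈ E, p.1 ≠ x)
    (hM : M ⊆ {p ∈ E | p.1 = h}) : IsKssFree s (E.image (moveEdges M x)) := by
  rintro ⟨S, T, hS, hT, hST⟩
  have hmem := fun {a b} => mem_image_moveEdges (a := a) (b := b) hx hM
  obtain ⟨b₀, hb₀⟩ : T.Nonempty := card_pos.1 (hT ▸ Nat.pos_of_ne_zero hE.ne_zero)
  let g : α → α := fun a => if a = x then h else a
  have hg : ∀ a ∈ S, ∀ b ∈ T, (g a, b) ∈ E := by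
    intro a ha b hb
    rcases hmem.1 (hST (mk_mem_product ha hb)) with ⟨rfl, hbM⟩ | ⟨habE, -⟩
    · simpa [g] using (mem_filter.1 (hM hbM)).1
    · simpa [g, hx _ habE] using habE
  have hxh : x ∈ S → h ∈ S → h = x := by
    intro hxS hhS
    by_contra hhx
    rcases hmem.1 (hST (mk_mem_product hxS hb₀)) with ⟨-, hbM⟩ | ⟨hbE, -⟩
    · rcases hmem.1 (hST (mk_mem_product hhS hb₀)) with ⟨hhx', -⟩ | ⟨-, hbM'⟩
      exacts [hhx hhx', hbM' hbM]
    · exact hx _ hbE rfl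
  have hinj : Set.InjOn g S := by
    intro a ha a' ha' haa'
    simp only [g] at haa'
    split_ifs at haa' with h1 h2 h2
    · exact h1.trans h2.symm
    · subst h1 haa'
      exact absurd (hxh ha ha') h2
    · subst h2 haa'
      exact absurd (hxh ha' ha) h1
    · exact haa'
  refine hE ⟨S.image g, T, (card_image_of_injOn hinj).trans hS, hT, ?_⟩
  rintro ⟨a', b⟩ hab
  obtain ⟨ha', hb⟩ := mem_product.1 hab
  obtain ⟨a, ha, rfl⟩ := mem_image.1 ha'
  exact hg a ha b hb

end moveEdges

variable [Fintype α]

lemma exists_moveEdges_to_isolated {E : Finset (α × β)} (hE : IsKssFree s E) (ht : t ≠ 0)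
    (hmin : ∀ a, leftDeg E a ≠ 0 → t ≤ leftDeg E a) (hcard : 2 * t * Fintype.card α ≤ #E)
    {x : α} (hx : leftDeg E x = 0) :
    ∃ F : Finset (α × β), IsKssFree s F ∧ #F = #E ∧ (∀ b, rightDeg F b = rightDeg E b) ∧
      (∀ a, leftDeg F a ≠ 0 → t ≤ leftDeg F a) ∧
      #{a | leftDeg F a = 0} < #{a | leftDeg E a = 0} := by
  obtain ⟨h, -, hh : 2 * t ≤ leftDeg E h⟩ :=
    exists_le_card_fiber_of_mul_le_card_of_maps_to (s := E) (t := univ)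
    (n := 2 * t) (fun p _ => mem_univ p.1) ⟨x, mem_univ x⟩ (by rwa [card_univ, mul_comm])
  obtain ⟨M, hM, hMcard⟩ := exists_subset_card_eq (show t ≤ #{p ∈ E | p.1 = h} by
    rw [leftDeg] at hh; omega)
  have hx' : ∀ p ∈ E, p.1 ≠ x := by
    rw [leftDeg, card_eq_zero, filter_eq_empty_iff] at hx
    exact hx
  set F := E.image (moveEdges M x)
  have hFx : leftDeg F x = t := (leftDeg_image_moveEdges_self hx' hM).trans hMcard
  have hFa : ∀ a ≠ x, leftDeg F a = if a = h then leftDeg E h - t else leftDeg E a := by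
    intro a hax
    rw [leftDeg_image_moveEdges_of_ne hx' hM hax]
    split_ifs with hah
    · rw [hah, card_sdiff_of_subset hM, hMcard, leftDeg]
    · rw [sdiff_eq_self_of_disjoint, leftDeg]
      refine disjoint_left.2 fun p hp hpM => hah ?_
      exact (mem_filter.1 hp).2.symm.trans (mem_filter.1 (hM hpM)).2
  refine ⟨F, hE.image_moveEdges hx' hM, card_image_moveEdges hx' hM,
    rightDeg_image_moveEdges hx' hM, fun a ha => ?_, card_lt_card ?_⟩
  · by_cases hax : a = x
    · rw [hax, hFx]
    rw [hFa a hax] at ha ⊢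
    split_ifs at ha ⊢
    · omega
    · exact hmin a ha
  · refine (ssubset_iff_of_subset fun a ha => ?_).2 ⟨x, by simpa using hx, by simpa [hFx]⟩
    simp only [mem_filter, mem_univ, true_and] at ha ⊢
    have hax : a ≠ x := by rintro rfl; omega
    rw [hFa a hax] at ha
    split_ifs at ha <;> omega

theorem exists_forall_le_leftDeg (ht : t ≠ 0) (E : Finset (α × β)) (hE : IsKssFree s E)
    (hmin : ∀ a, leftDeg E a ≠ 0 → t ≤ leftDeg E a) (hcard : 2 * t * Fintype.card α ≤ #E) :
    ∃ F : Finset (α × β), IsKssFree s F ∧ #F = #E ∧ (∀ a, t ≤ leftDeg F a) ∧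
      ∀ b, rightDeg F b = rightDeg E b := by
  by_cases hiso : ∃ x, leftDeg E x = 0
  · obtain ⟨x, hx⟩ := hiso
    obtain ⟨F, hF, hFcard, hFR, hFmin, hlt⟩ := exists_moveEdges_to_isolated hE ht hmin hcard hx
    obtain ⟨F', hF', hF'card, hF'L, hF'R⟩ :=
      exists_forall_le_leftDeg ht F hF hFmin (hFcard ▸ hcard)
    exact ⟨F', hF', hF'card.trans hFcard, hF'L, fun b => (hF'R b).trans (hFR b)⟩
  · simp only [not_exists] at hiso
    exact ⟨E, hE, rfl, fun a => hmin a (hiso a), fun _ => rfl⟩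
termination_by #{a | leftDeg E a = 0}

variable [Fintype β]

/-- Choose `H ⊆ G` maximising `#H - θ · (number of non-isolated vertices of H)`: deleting the
edges at a vertex of degree in `(0, θ)` would increase this potential. -/
theorem exists_subset_degrees_zero_or_ge (θ : ℕ) (G : Finset (α × β)) :
    ∃ H ⊆ G, (∀ a, leftDeg H a ≠ 0 → θ ≤ leftDeg H a) ∧
      (∀ b, rightDeg H b ≠ 0 → θ ≤ rightDeg H b) ∧
      #G ≤ #H + θ * (Fintype.card α + Fintype.card β) := by
  let n : Finset (α × β) → ℕ := fun H => #(H.image Prod.fst) + #(H.image Prod.snd)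
  obtain ⟨H, hHG, hmax⟩ := G.powerset.exists_max_image
    (fun H => (#H : ℤ) - θ * n H) ⟨G, mem_powerset_self G⟩
  rw [mem_powerset] at hHG
  have hdrop : ∀ H' ⊆ H, n H' < n H → #H < #H' + θ → False := by
    intro H' hH' hn hcard
    have := hmax H' (mem_powerset.2 (hH'.trans hHG))
    have : θ * n H' + θ ≤ θ * n H := by rw [← Nat.mul_succ]; exact Nat.mul_le_mul_left θ hn
    linarith
  refine ⟨H, hHG, fun a ha => ?_, fun b hb => ?_, ?_⟩
  · by_contra! hlt
    refine hdrop _ (filter_subset (·.1 ≠ a) H) ?_ ?_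
    · exact add_lt_add_of_lt_of_le (card_image_filter_ne_lt _ (leftDeg_ne_zero_iff.1 ha))
        (card_le_card (image_subset_image (filter_subset _ _)))
    · have := card_filter_add_card_filter_not (s := H) (·.1 = a)
      simp only [leftDeg, ne_eq] at hlt ⊢
      omega
  · by_contra! hlt
    refine hdrop _ (filter_subset (·.2 ≠ b) H) ?_ ?_
    · exact add_lt_add_of_le_of_lt (card_le_card (image_subset_image (filter_subset _ _)))
        (card_image_filter_ne_lt _ (rightDeg_ne_zero_iff.1 hb))
    · have := card_filter_add_card_filter_not (s := H) (·.2 = b)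
      simp only [rightDeg, ne_eq] at hlt ⊢
      omega
  · have hGH := hmax G (mem_powerset_self G)
    have hnG : n G ≤ Fintype.card α + Fintype.card β :=
      add_le_add (card_le_univ _) (card_le_univ _)
    have hθnG : (θ * n G : ℤ) ≤ θ * (Fintype.card α + Fintype.card β) := by
      exact_mod_cast Nat.mul_le_mul_left θ hnG
    have hθnH : (0 : ℤ) ≤ θ * n H := by positivity
    zify
    linarith

theorem exists_forall_le_leftDeg_rightDeg (ht : t ≠ 0) {E : Finset (α × β)} (hE : IsKssFree s E)
    (hcard : 2 * t * (Fintype.card α + Fintype.card β) +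
      2 * t * max (Fintype.card α) (Fintype.card β) ≤ #E) :
    ∃ F : Finset (α × β), IsKssFree s F ∧ (∀ a, t ≤ leftDeg F a) ∧ ∀ b, t ≤ rightDeg F b := by
  obtain ⟨H, hHE, hHL, hHR, hloss⟩ := exists_subset_degrees_zero_or_ge (2 * t) E
  have hH : 2 * t * max (Fintype.card α) (Fintype.card β) ≤ #H := by linarith
  have hHα := (Nat.mul_le_mul_left (2 * t) (le_max_left _ _)).trans hH
  have hHβ := (Nat.mul_le_mul_left (2 * t) (le_max_right _ _)).trans hH
  obtain ⟨F, hF, hFcard, hFL, hFR⟩ := exists_forall_le_leftDeg ht H (hE.mono hHE)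
    (fun a ha => by linarith [hHL a ha]) hHα
  obtain ⟨F', hF', hF'card, hF'L, hF'R⟩ := exists_forall_le_leftDeg ht (F.image Prod.swap)
    hF.image_swap (fun b hb => by rw [leftDeg_image_swap, hFR] at hb ⊢; linarith [hHR b hb])
    (by rwa [card_image_of_injective _ Prod.swap_injective, hFcard])
  refine ⟨F'.image Prod.swap, hF'.image_swap, fun a => ?_, fun b => ?_⟩
  · rw [leftDeg_image_swap, hF'R, rightDeg_image_swap]
    exact hFL a
  · rw [rightDeg_image_swap]
    exact hF'L b

end Zarankiewicz

open Zarankiewicz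

lemma kssFree_iff_isKssFree {n s : ℕ} (E : Finset (Fin n × Fin n)) :
    KssFree s (fun a b => (a, b) ∈ E) ↔ IsKssFree s E := by
  simp only [KssFree, IsKssFree, ← coe_subset, coe_product, Set.prod_subset_iff, mem_coe]

lemma exists_isKssFree_card_eq_zar {s : ℕ} (hs : s ≠ 0) (n : ℕ) :
    ∃ E : Finset (Fin n × Fin n), IsKssFree s E ∧ #E = zar n s := by
  classical
  have hne : {e | ∃ R : Fin n → Fin n → Prop, KssFree s R ∧
      e = ({p : Fin n × Fin n | R p.1 p.2}).ncard}.Nonempty := by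
    refine ⟨_, fun _ _ => False, ?_, rfl⟩
    rintro ⟨S, T, hS, hT, hST⟩
    obtain ⟨a, ha⟩ := card_pos.1 (show 0 < #S by omega)
    obtain ⟨b, hb⟩ := card_pos.1 (show 0 < #T by omega)
    exact hST a ha b hb
  have hbdd : BddAbove {e | ∃ R : Fin n → Fin n → Prop, KssFree s R ∧
      e = ({p : Fin n × Fin n | R p.1 p.2}).ncard} := by
    refine ⟨Nat.card (Fin n × Fin n), ?_⟩
    rintro e ⟨R, -, rfl⟩
    exact Set.ncard_le_card _
  obtain ⟨R, hR, he⟩ := Nat.sSup_mem hne hbdd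
  refine ⟨univ.filter fun p => R p.1 p.2, ?_, ?_⟩
  · rw [← kssFree_iff_isKssFree]
    simpa using hR
  · rw [zar, he, ← Set.ncard_coe_finset, coe_filter]
    simp

lemma ncard_setOf_mem_eq_leftDeg {α β : Type*} [DecidableEq α] (E : Finset (α × β)) (a : α) :
    {b | (a, b) ∈ E}.ncard = leftDeg E a := by
  rw [leftDeg, ← Set.ncard_coe_finset, ← Set.InjOn.ncard_image (f := Prod.snd)]
  · congr 1
    ext b
    simp
  · rintro p hp q hq hpq
    simp only [coe_filter, Set.mem_ofPred_eq] at hp hq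
    exact Prod.ext (hp.2.trans hq.2.symm) hpq

lemma ncard_setOf_mem_eq_rightDeg {α β : Type*} [DecidableEq β] (E : Finset (α × β)) (b : β) :
    {a | (a, b) ∈ E}.ncard = rightDeg E b := by
  rw [rightDeg, ← Set.ncard_coe_finset, ← Set.InjOn.ncard_image (f := Prod.fst)]
  · congr 1
    ext a
    simp
  · rintro p hp q hq hpq
    simp only [coe_filter, Set.mem_ofPred_eq] at hp hq
    exact Prod.ext hpq (hp.2.trans hq.2.symm)

theorem exists_kssFree_forall_le_ncard {s t N : ℕ} (hs : s ≠ 0) (ht : t ≠ 0)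
    (hzar : 6 * t * N ≤ zar N s) :
    ∃ H : Fin N → Fin N → Prop, KssFree s H ∧
      (∀ a, t ≤ {b | H a b}.ncard) ∧ ∀ b, t ≤ {a | H a b}.ncard := by
  obtain ⟨E, hE, hEcard⟩ := exists_isKssFree_card_eq_zar hs N
  obtain ⟨F, hF, hFL, hFR⟩ := exists_forall_le_leftDeg_rightDeg ht hE
    (by simp only [Fintype.card_fin, max_self]; linarith)
  refine ⟨fun a b => (a, b) ∈ F, (kssFree_iff_isKssFree F).2 hF, fun a => ?_, fun b => ?_⟩
  · rw [ncard_setOf_mem_eq_leftDeg]; exact hFL a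
  · rw [ncard_setOf_mem_eq_rightDeg]; exact hFR b

lemma six_mul_ceil_le {c δ y : ℝ} (hc : 0 < c) (hδ0 : 0 ≤ δ) (hδ : δ ≤ c / 8)
    (hy : 24 / c ≤ y) : 6 * (⌈δ * y⌉₊ : ℝ) ≤ c * y := by
  have hy0 : 0 ≤ y := (by positivity : (0 : ℝ) ≤ 24 / c).trans hy
  have h24 : 24 ≤ c * y := by rwa [div_le_iff₀ hc, mul_comm] at hy
  have hceil : (⌈δ * y⌉₊ : ℝ) < δ * y + 1 := Nat.ceil_lt_add_one (by positivity)
  nlinarith [mul_le_mul_of_nonneg_right hδ hy0]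

open Filter in
lemma eventually_six_mul_ceil_mul_le {f : ℕ → ℕ} {c δ r : ℝ} (hc : 0 < c) (hδ0 : 0 ≤ δ)
    (hδ : δ ≤ c / 8) (hr : 0 < r) (hf : ∀ᶠ m : ℕ in atTop, c * (m : ℝ) ^ (r + 1) ≤ f m) :
    ∀ᶠ N : ℕ in atTop, 6 * ⌈δ * (N : ℝ) ^ r⌉₊ * N ≤ f N := by
  filter_upwards [hf, eventually_ne_atTop 0,
    ((tendsto_rpow_atTop hr).comp tendsto_natCast_atTop_atTop).eventually_ge_atTop (24 / c)]
    with N hfN hN (hy : 24 / c ≤ (N : ℝ) ^ r)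
  rw [Real.rpow_add_one (Nat.cast_ne_zero.2 hN)] at hfN
  have := mul_le_mul_of_nonneg_right (six_mul_ceil_le hc hδ0 hδ hy) N.cast_nonneg
  exact_mod_cast (show (6 * ⌈δ * (N : ℝ) ^ r⌉₊ * N : ℝ) ≤ f N by linarith)

open Filter in
theorem stmt3_general (s : ℕ) (hs : 2 ≤ s) (c C : ℝ) (hc : 0 < c)
    (hz : ∃ m₀ : ℕ, ∀ m : ℕ, m₀ ≤ m →
      c * (m : ℝ) ^ ((2 : ℝ) - 1 / (s : ℝ)) ≤ (zar m s : ℝ) ∧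
      (zar m s : ℝ) ≤ C * (m : ℝ) ^ ((2 : ℝ) - 1 / (s : ℝ))) :
    ∃ N₀ : ℕ, ∀ N : ℕ, N₀ ≤ N →
      ∃ H : Fin N → Fin N → Prop, KssFree s H ∧
        (∀ a : Fin N,
          c / 8 * (c / (2 * C)) ^ ((1 : ℝ) / ((s : ℝ) - 1)) * (N : ℝ) ^ ((1 : ℝ) - 1 / (s : ℝ))
            ≤ (({b | H a b} : Set (Fin N)).ncard : ℝ)) ∧
        (∀ b : Fin N,
          c / 8 * (c / (2 * C)) ^ ((1 : ℝ) / ((s : ℝ) - 1)) * (N : ℝ) ^ ((1 : ℝ) - 1 / (s : ℝ))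
            ≤ (({a | H a b} : Set (Fin N)).ncard : ℝ)) := by
  obtain ⟨m₀, hz⟩ := hz
  have hsR : (2 : ℝ) ≤ s := by exact_mod_cast hs
  have hcC : c ≤ C := by
    obtain ⟨hlow, hup⟩ := hz (m₀ + 1) m₀.le_succ
    exact le_of_mul_le_mul_right (hlow.trans hup) (by positivity)
  set δ := c / 8 * (c / (2 * C)) ^ ((1 : ℝ) / ((s : ℝ) - 1))
  have hδ0 : 0 < δ := by have := hc.trans_le hcC; positivity
  have hδ : δ ≤ c / 8 := mul_le_of_le_one_right (by positivity) <| Real.rpow_le_one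
    (by have := hc.trans_le hcC; positivity) ((div_le_one (by linarith)).2 (by linarith))
    (div_nonneg zero_le_one (by linarith))
  have hr : 0 < 1 - 1 / (s : ℝ) := by
    rw [sub_pos, div_lt_one (by linarith)]
    linarith
  have hlow : ∀ᶠ m : ℕ in atTop, c * (m : ℝ) ^ ((1 - 1 / (s : ℝ)) + 1) ≤ zar m s :=
    eventually_atTop.2 ⟨m₀, fun m hm => by convert (hz m hm).1 using 3; ring⟩
  obtain ⟨N₀, hN₀⟩ := eventually_atTop.1 <|
    (eventually_six_mul_ceil_mul_le hc hδ0.le hδ hr hlow).and (eventually_gt_atTop 0)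
  refine ⟨N₀, fun N hN => ?_⟩
  obtain ⟨hzar, hN0⟩ := hN₀ N hN
  have ht : ⌈δ * (N : ℝ) ^ (1 - 1 / (s : ℝ))⌉₊ ≠ 0 := by
    have := Real.rpow_pos_of_pos (Nat.cast_pos.2 hN0 : (0 : ℝ) < N) (1 - 1 / (s : ℝ))
    exact (Nat.ceil_pos.2 (by positivity)).ne'
  obtain ⟨H, hH, hL, hR⟩ := exists_kssFree_forall_le_ncard (by omega) ht hzar
  exact ⟨H, hH, fun a => (Nat.le_ceil _).trans (by exact_mod_cast hL a),
    fun b => (Nat.le_ceil _).trans (by exact_mod_cast hR b)⟩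

theorem stmt3 (s : ℕ) (hs : 2 ≤ s) (c C : ℝ) (hc : 0 < c) (hC : 0 < C)
    (hz : ∃ m₀ : ℕ, ∀ m : ℕ, m₀ ≤ m →
      c * (m : ℝ) ^ ((2 : ℝ) - 1 / (s : ℝ)) ≤ (zar m s : ℝ) ∧
      (zar m s : ℝ) ≤ C * (m : ℝ) ^ ((2 : ℝ) - 1 / (s : ℝ))) :
    ∃ N₀ : ℕ, ∀ N : ℕ, N₀ ≤ N →
      ∃ H : Fin N → Fin N → Prop, KssFree s H ∧
        (∀ a : Fin N,
          c / 8 * (c / (2 * C)) ^ ((1 : ℝ) / ((s : ℝ) - 1)) * (N : ℝ) ^ ((1 : ℝ) - 1 / (s : ℝ))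
            ≤ (({b | H a b} : Set (Fin N)).ncard : ℝ)) ∧
        (∀ b : Fin N,
          c / 8 * (c / (2 * C)) ^ ((1 : ℝ) / ((s : ℝ) - 1)) * (N : ℝ) ^ ((1 : ℝ) - 1 / (s : ℝ))
            ≤ (({a | H a b} : Set (Fin N)).ncard : ℝ)) :=
  stmt3_general s hs c C hc hz
end

section
/- Let G be a simple graph, let s ≥ 1 and r ≥ 2 be integers, and let D ≥ 0 be a real number. Let A_1, B_1, …, A_{r−1}, B_{r−1} be pairwise disjoint vertex subsets of G such that for every i ∈ [r−1], every vertex of A_i ∪ B_i has at most D neighbors in ⋃_{j≠i}(A_j ∪ B_j). Suppose A'_i ⊆ A_i and B'_i ⊆ B_i satisfy min{|A'_i|, |B'_i|} ≥ 2(i−1)sD + s for every i ∈ [r−1]. Then there exist s-element subsets A''_i ⊆ A'_i and B''_i ⊆ B'_i for i ∈ [r−1] such that for all i ≠ j in [r−1] there is no edge of G between A''_i ∪ B''_i and A''_j ∪ B''_j. -/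
/-!
Choose the sets group by group. When the `i`-th group is reached, the sets already chosen contain
at most `2(i-1)s` vertices, each with at most `D` neighbours in `A'_i` and in `B'_i`; discarding
these at most `2(i-1)sD` neighbours still leaves `s` vertices in each of `A'_i` and `B'_i`.
-/

namespace SimpleGraph

open Finset

variable {V : Type*} (G : SimpleGraph V) [DecidableRel G.Adj]

theorem card_filter_adj_le_of_ncard_le {ι : Type*} [Finite ι] (P : ι → Finset V) {D : ℝ}
    {i j : ι} (hij : i ≠ j) {X : Finset V} (hX : X ⊆ P i) {y : V}
    (hy : (({z | (∃ l, l ≠ j ∧ z ∈ P l) ∧ G.Adj y z} : Set V).ncard : ℝ) ≤ D) :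
    (#{x ∈ X | G.Adj y x} : ℝ) ≤ D := by
  have hfin : {z | (∃ l, l ≠ j ∧ z ∈ P l) ∧ G.Adj y z}.Finite :=
    (Set.finite_iUnion fun l => (P l).finite_toSet).subset fun z ⟨⟨l, _, hz⟩, _⟩ =>
      Set.mem_iUnion.2 ⟨l, hz⟩
  have hsub : (({x ∈ X | G.Adj y x} : Finset V) : Set V) ⊆
      {z | (∃ l, l ≠ j ∧ z ∈ P l) ∧ G.Adj y z} := fun x hx => by
    obtain ⟨hxX, hxy⟩ := mem_filter.1 hx
    exact ⟨⟨i, hij, hX hxX⟩, hxy⟩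
  have := Set.ncard_le_ncard hsub hfin
  rw [Set.ncard_coe_finset] at this
  exact le_trans (mod_cast this) hy

variable [DecidableEq V]

theorem exists_subset_card_eq_forall_not_adj (S C : Finset V) (s : ℕ) {D : ℝ}
    (hdeg : ∀ y ∈ C, (#{x ∈ S | G.Adj y x} : ℝ) ≤ D) (hcard : #C * D + s ≤ #S) :
    ∃ T ⊆ S, #T = s ∧ ∀ x ∈ T, ∀ y ∈ C, ¬ G.Adj x y := by
  set N := C.biUnion fun y => {x ∈ S | G.Adj y x}
  have hN : (#N : ℝ) ≤ #C * D := calc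
    (#N : ℝ) ≤ ∑ y ∈ C, (#{x ∈ S | G.Adj y x} : ℝ) := mod_cast card_biUnion_le
    _ ≤ ∑ _y ∈ C, D := sum_le_sum hdeg
    _ = #C * D := by rw [sum_const, nsmul_eq_mul]
  have hSN : (#S : ℝ) ≤ #(S \ N) + #N := mod_cast card_le_card_sdiff_add_card
  have hs : (s : ℝ) ≤ #(S \ N) := by linarith
  obtain ⟨T, hTSN, hT⟩ := exists_subset_card_eq (s := S \ N) (n := s) (mod_cast hs)
  refine ⟨T, hTSN.trans sdiff_subset, hT, fun x hx y hy hxy => ?_⟩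
  have hx := mem_sdiff.1 (hTSN hx)
  exact hx.2 (mem_biUnion.2 ⟨y, hy, mem_filter.2 ⟨hx.1, hxy.symm⟩⟩)

theorem exists_subsets_card_eq_pairwise_not_adj {κ : Type*} [Fintype κ] (s : ℕ) {D : ℝ}
    (hD : 0 ≤ D) : ∀ {m : ℕ} (S : Fin m → κ → Finset V),
    (∀ i j, i ≠ j → ∀ k k', ∀ y ∈ S j k', (#{x ∈ S i k | G.Adj y x} : ℝ) ≤ D) →
    (∀ (i : Fin m) k, (i : ℕ) * Fintype.card κ * s * D + s ≤ #(S i k)) →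
    ∃ T : Fin m → κ → Finset V, (∀ i k, T i k ⊆ S i k) ∧ (∀ i k, #(T i k) = s) ∧
      ∀ i j, i ≠ j → ∀ k k', ∀ x ∈ T i k, ∀ y ∈ T j k', ¬ G.Adj x y
  | 0, _, _, _ => ⟨fun i => i.elim0, fun i => i.elim0, fun i => i.elim0, fun i => i.elim0⟩
  | m + 1, S, hdeg, hcard => by
    obtain ⟨T, hTS, hTcard, hTsep⟩ := exists_subsets_card_eq_pairwise_not_adj s hD
      (fun i => S i.castSucc) (fun i j hij => hdeg _ _ (Fin.castSucc_injective _ |>.ne hij))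
      (fun i k => by simpa using hcard i.castSucc k)
    set C := univ.biUnion fun i => univ.biUnion (T i)
    have hC : #C ≤ m * Fintype.card κ * s := calc
      #C ≤ ∑ i, #(univ.biUnion (T i)) := card_biUnion_le
      _ ≤ ∑ i, ∑ k, #(T i k) := sum_le_sum fun i _ => card_biUnion_le
      _ = m * Fintype.card κ * s := by simp [hTcard, mul_assoc]
    have hCdeg : ∀ k, ∀ y ∈ C, (#{x ∈ S (Fin.last m) k | G.Adj y x} : ℝ) ≤ D := by
      intro k y hy
      obtain ⟨j, -, k', -, hy⟩ := by simpa only [C, mem_biUnion] using hy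
      exact hdeg _ _ (Fin.castSucc_lt_last j).ne' k k' y (hTS j k' hy)
    have hCcard : ∀ k, (#C : ℝ) * D + s ≤ #(S (Fin.last m) k) := fun k => calc
      (#C : ℝ) * D + s ≤ m * Fintype.card κ * s * D + s := by gcongr; exact_mod_cast hC
      _ ≤ #(S (Fin.last m) k) := by simpa using hcard (Fin.last m) k
    choose U hUS hUcard hUC using fun k =>
      exists_subset_card_eq_forall_not_adj G (S (Fin.last m) k) C s (hCdeg k) (hCcard k)
    have hTC : ∀ j k', T j k' ⊆ C := fun j k' y hy => by
      simpa only [C, mem_biUnion] using ⟨j, mem_univ _, k', mem_univ _, hy⟩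
    refine ⟨Fin.lastCases U T, fun i => ?_, fun i => ?_, fun i j hij => ?_⟩
    · induction i using Fin.lastCases <;> simp [hUS, hTS]
    · induction i using Fin.lastCases <;> simp [hUcard, hTcard]
    · induction i using Fin.lastCases with
      | last =>
        induction j using Fin.lastCases with
        | last => exact absurd rfl hij
        | cast j => simpa using fun k k' x hx y hy => hUC k x hx y (hTC j k' hy)
      | cast i =>
        induction j using Fin.lastCases with
        | last => simpa using fun k k' x hx y hy hxy => hUC k' y hy x (hTC i k hx) hxy.symm
        | cast j => simpa using hTsep i j (by simpa using hij)

end SimpleGraph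

theorem stmt8_general {V : Type*} [DecidableEq V] (G : SimpleGraph V) (s r : ℕ)
    (D : ℝ) (hD : 0 ≤ D)
    (A B : Fin (r - 1) → Finset V)
    -- every vertex of A_i ∪ B_i has at most D neighbors in ⋃_{j ≠ i} (A_j ∪ B_j)
    (hdeg : ∀ i, ∀ x ∈ A i ∪ B i,
      ((({y | (∃ j, j ≠ i ∧ y ∈ A j ∪ B j) ∧ G.Adj x y} : Set V).ncard : ℝ) ≤ D))
    (A' B' : Fin (r - 1) → Finset V)
    (hA' : ∀ i, A' i ⊆ A i) (hB' : ∀ i, B' i ⊆ B i)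
    -- min{|A'_i|, |B'_i|} ≥ 2(i-1)sD + s, where index i : Fin (r-1) represents i-1
    (hcard : ∀ i : Fin (r - 1),
      2 * (i : ℕ) * s * D + s ≤ min ((A' i).card : ℝ) ((B' i).card : ℝ)) :
    ∃ A'' B'' : Fin (r - 1) → Finset V,
      (∀ i, A'' i ⊆ A' i) ∧ (∀ i, B'' i ⊆ B' i) ∧
      (∀ i, (A'' i).card = s) ∧ (∀ i, (B'' i).card = s) ∧
      ∀ i j, i ≠ j → ∀ x ∈ A'' i ∪ B'' i, ∀ y ∈ A'' j ∪ B'' j, ¬ G.Adj x y := by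
  classical
  have hS : ∀ i (k : Fin 2), ![A' i, B' i] k ⊆ A i ∪ B i := by
    intro i k
    fin_cases k
    exacts [(hA' i).trans Finset.subset_union_left, (hB' i).trans Finset.subset_union_right]
  obtain ⟨T, hTS, hTcard, hTsep⟩ := G.exists_subsets_card_eq_pairwise_not_adj (κ := Fin 2) s hD
    (fun i => ![A' i, B' i])
    (fun i j hij k k' y hy => G.card_filter_adj_le_of_ncard_le (fun l => A l ∪ B l) hij
      (hS i k) (hdeg j y (hS j k' hy)))
    (fun i => Fin.forall_fin_two.2 <| by
      obtain ⟨hA, hB⟩ := le_min_iff.1 (hcard i)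
      simp only [Fintype.card_fin, Nat.cast_ofNat, Matrix.cons_val_zero, Matrix.cons_val_one]
      constructor <;> linarith)
  refine ⟨fun i => T i 0, fun i => T i 1, fun i => hTS i 0, fun i => hTS i 1,
    fun i => hTcard i 0, fun i => hTcard i 1, fun i j hij x hx y hy => ?_⟩
  obtain ⟨k, hx⟩ := (Fin.exists_fin_two (p := fun k => x ∈ T i k)).2 (Finset.mem_union.1 hx)
  obtain ⟨k', hy⟩ := (Fin.exists_fin_two (p := fun k => y ∈ T j k)).2 (Finset.mem_union.1 hy)
  exact hTsep i j hij k k' x hx y hy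

theorem stmt8 {V : Type*} [DecidableEq V] (G : SimpleGraph V) (s r : ℕ)
    (hs : 1 ≤ s) (hr : 2 ≤ r) (D : ℝ) (hD : 0 ≤ D)
    (A B : Fin (r - 1) → Finset V)
    (hdisj : ∀ i, Disjoint (A i) (B i))
    (hdisj' : ∀ i j, i ≠ j → Disjoint (A i ∪ B i) (A j ∪ B j))
    -- every vertex of A_i ∪ B_i has at most D neighbors in ⋃_{j ≠ i} (A_j ∪ B_j)
    (hdeg : ∀ i, ∀ x ∈ A i ∪ B i,
      ((({y | (∃ j, j ≠ i ∧ y ∈ A j ∪ B j) ∧ G.Adj x y} : Set V).ncard : ℝ) ≤ D))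
    (A' B' : Fin (r - 1) → Finset V)
    (hA' : ∀ i, A' i ⊆ A i) (hB' : ∀ i, B' i ⊆ B i)
    -- min{|A'_i|, |B'_i|} ≥ 2(i-1)sD + s, where index i : Fin (r-1) represents i-1
    (hcard : ∀ i : Fin (r - 1),
      2 * (i : ℕ) * s * D + s ≤ min ((A' i).card : ℝ) ((B' i).card : ℝ)) :
    ∃ A'' B'' : Fin (r - 1) → Finset V,
      (∀ i, A'' i ⊆ A' i) ∧ (∀ i, B'' i ⊆ B' i) ∧
      (∀ i, (A'' i).card = s) ∧ (∀ i, (B'' i).card = s) ∧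
      ∀ i j, i ≠ j → ∀ x ∈ A'' i ∪ B'' i, ∀ y ∈ A'' j ∪ B'' j, ¬ G.Adj x y :=
  stmt8_general G s r D hD A B hdeg A' B' hA' hB' hcard
end

section
/- For every even integer r ≥ 2 and every positive integer n divisible by r−1, there exists an r-partite graph G with parts of size n such that G is the vertex-disjoint union of r−1 complete bipartite graphs each with both sides of size rn/(2r−2) (so G is rn/(2r−2)-regular), and G contains no independent transversal. -/
/-!
Write `r = 2k` and `n = (2k - 1) t`. It suffices to treat `t = 1`: blowing every vertex up into
`t` copies turns each `K_{k,k}` into a `K_{kt,kt}`, and an independent transversal of the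
blow-up projects to one of the original graph.

For `t = 1` split the parts into two halves of `k` parts each. Inside a half, `k - 1` copies of
`K_{k,k}` are placed so that every transversal of the half avoiding a set `L` of `k` leftover
vertices contains an edge: for `q < k - 1` the lower `k` vertices of part `q` form one side of
block `q + 1`, while every upper vertex of part `q` lies on the other side of some block `j ≤ q`,
so by induction on `q` an independent transversal avoiding `L` uses only lower vertices, and the
last two parts then clash. The remaining copy of `K_{k,k}` joins the leftover sets of the two halves, so an
independent transversal would have to use adjacent leftover vertices from both halves.
-/

/-- An `r`-partite graph on vertex set `Fin r × Fin n` (part `i` is `{i} × Fin n`):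
all parts are independent sets. -/
def IsPartite {r n : ℕ} (G : SimpleGraph (Fin r × Fin n)) : Prop :=
  ∀ (i : Fin r) (x y : Fin n), ¬ G.Adj (i, x) (i, y)

/-- `G` has an independent transversal: one vertex from each part, pairwise nonadjacent. -/
def HasIT {r n : ℕ} (G : SimpleGraph (Fin r × Fin n)) : Prop :=
  ∃ f : Fin r → Fin n, ∀ i j : Fin r, i ≠ j → ¬ G.Adj (i, f i) (j, f j)

open Finset

section BlockGraph

variable {V ι : Type*}

/-- `c v = (i, b)` puts `v` on side `b` of block `i`. -/
def blockGraph (c : V → ι × Bool) : SimpleGraph V where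
  Adj u v := (c u).1 = (c v).1 ∧ (c u).2 ≠ (c v).2
  symm := ⟨fun _ _ h => ⟨h.1.symm, h.2.symm⟩⟩
  loopless := ⟨fun _ h => h.2 rfl⟩

variable [Fintype V] [DecidableEq ι] (c : V → ι × Bool)

lemma neighborSet_blockGraph (v : V) :
    (blockGraph c).neighborSet v = ↑({w | c w = ((c v).1, !(c v).2)} : Finset V) := by
  ext w
  simp only [SimpleGraph.mem_neighborSet, blockGraph, coe_filter, mem_univ, true_and,
    Set.mem_ofPred_eq, Prod.ext_iff]
  cases (c v).2 <;> cases (c w).2 <;> simp [eq_comm]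

lemma exists_blockGraph_decomposition [DecidableEq V] {m : ℕ}
    (hc : ∀ y, #{v | c v = y} = m) :
    ∃ A B : ι → Finset V,
      (∀ i, Disjoint (A i) (B i)) ∧
      (∀ i j, i ≠ j → Disjoint (A i ∪ B i) (A j ∪ B j)) ∧
      (∀ v, ∃ i, v ∈ A i ∨ v ∈ B i) ∧
      (∀ i, #(A i) = m) ∧ (∀ i, #(B i) = m) ∧
      (∀ u v, (blockGraph c).Adj u v ↔ ∃ i, (u ∈ A i ∧ v ∈ B i) ∨ (u ∈ B i ∧ v ∈ A i)) := by
  refine ⟨fun i => {v | c v = (i, true)}, fun i => {v | c v = (i, false)}, fun i => ?_,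
    fun i j hij => ?_, fun v => ⟨(c v).1, ?_⟩, fun i => hc _, fun i => hc _, fun u v => ?_⟩
  · exact disjoint_filter.2 fun v _ h h' => by simp [h] at h'
  · refine disjoint_left.2 fun v hi hj => hij ?_
    simp only [mem_union, mem_filter, mem_univ, true_and] at hi hj
    rcases hi with hi | hi <;> rcases hj with hj | hj <;> simp_all
  · simp only [mem_filter, mem_univ, true_and]
    cases h : (c v).2 <;> simp [Prod.ext_iff, h]
  · simp only [blockGraph, mem_filter, mem_univ, true_and, Prod.ext_iff]
    constructor
    · rintro ⟨h1, h2⟩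
      refine ⟨(c u).1, ?_⟩
      cases hu : (c u).2 <;> cases hv : (c v).2 <;> simp_all
    · rintro ⟨i, ⟨⟨hu1, hu2⟩, hv1, hv2⟩ | ⟨⟨hu1, hu2⟩, hv1, hv2⟩⟩ <;> simp_all

end BlockGraph

lemma isPartite_blockGraph {r n : ℕ} {ι : Type*} (c : Fin r × Fin n → ι × Bool)
    (h : ∀ i x y, (c (i, x)).1 = (c (i, y)).1 → (c (i, x)).2 = (c (i, y)).2) :
    IsPartite (blockGraph c) :=
  fun i x y hxy => hxy.2 (h i x y hxy.1)

lemma not_hasIT_blockGraph {r n : ℕ} {ι : Type*} (c : Fin r × Fin n → ι × Bool)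
    (h : ∀ f : Fin r → Fin n,
      ∃ i j, (c (i, f i)).1 = (c (j, f j)).1 ∧ (c (i, f i)).2 ≠ (c (j, f j)).2) :
    ¬ HasIT (blockGraph c) := by
  rintro ⟨f, hf⟩
  obtain ⟨i, j, h1, h2⟩ := h f
  exact hf i j (by rintro rfl; exact h2 rfl) ⟨h1, h2⟩

/-- Fibres have at least `m` elements because of the sections `ψ y`, and the count of `V`
leaves no room for more. -/
lemma card_filter_eq_of_section {V β : Type*} [Fintype V] [DecidableEq V] [Fintype β]
    [DecidableEq β] {m : ℕ} (c : V → β) (ψ : β → Fin m → V) (hψ : ∀ y s, c (ψ y s) = y)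
    (hinj : ∀ y, Function.Injective (ψ y)) (hcard : Fintype.card V = Fintype.card β * m)
    (y : β) : #{v | c v = y} = m := by
  have hle : ∀ y ∈ (univ : Finset β), m ≤ #{v | c v = y} := fun y _ => by
    calc m = #(univ.image (ψ y)) := by rw [card_image_of_injective _ (hinj y), card_fin]
      _ ≤ _ := card_le_card fun v hv => by
        obtain ⟨s, -, rfl⟩ := mem_image.1 hv
        simp [hψ]
  have hsum : ∑ _y : β, m = ∑ y, #{v | c v = y} := by
    rw [← card_eq_sum_card_fiberwise (fun v _ => mem_univ (c v)), card_univ, hcard,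
      sum_const, card_univ, smul_eq_mul]
  exact ((sum_eq_sum_iff_of_le hle).1 hsum y (mem_univ y)).symm

/-- Each vertex `(p, x)` is replaced by the `t` vertices `(p, x * t + s)`, `s < t`. -/
def blowup {a N t : ℕ} {β : Type*} (c : Fin a × Fin N → β) (v : Fin a × Fin (N * t)) : β :=
  c (v.1, v.2.divNat)

lemma card_filter_blowup_eq {a N t : ℕ} {β : Type*} [DecidableEq β] (c : Fin a × Fin N → β)
    (y : β) : #{v : Fin a × Fin (N * t) | blowup c v = y} = #{v | c v = y} * t := by
  rw [show #{v | c v = y} * t = #(({v | c v = y} : Finset (Fin a × Fin N)) ×ˢ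
      (univ : Finset (Fin t))) by rw [card_product, card_univ, Fintype.card_fin]]
  refine card_equiv ((Equiv.prodCongr (Equiv.refl _) finProdFinEquiv.symm).trans
    (Equiv.prodAssoc _ _ _).symm) fun v => ?_
  rw [mem_filter, mem_product, mem_filter]
  simp [blowup]

namespace IndependentTransversal

/-- The block and side of vertex `u` of part `q` inside one half (`k` parts `q < k`, each with
vertices `u < 2k - 1`). The lower vertices `u < k` of part `q` form the side `true` of block
`q + 1`, except in the last part, where they form the side `false` of block `k - 1`; the upper
vertices of part `q` lie on the side `false` of block `q` or `q - 1`. Block `0`, which gets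
only a side `false`, is the set of `k` leftover vertices. -/
def halfLabel (k q u : ℕ) : ℕ × Bool :=
  if u < k then (if q + 1 < k then (q + 1, true) else (k - 1, false))
  else (if u + q + 1 < 2 * k then q else q - 1, false)

lemma halfLabel_of_lt {k q u : ℕ} (hu : u < k) (hq : q + 1 < k) :
    halfLabel k q u = (q + 1, true) := by
  simp [halfLabel, hu, hq]

lemma halfLabel_last {k u : ℕ} (hu : u < k) : halfLabel k (k - 1) u = (k - 1, false) := by
  simp [halfLabel, hu, show ¬k - 1 + 1 < k by omega]

lemma halfLabel_of_le {k q u : ℕ} (hu : k ≤ u) :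
    (halfLabel k q u).1 ≤ q ∧ (halfLabel k q u).2 = false := by
  unfold halfLabel
  split_ifs <;> simp <;> omega

lemma halfLabel_fst_le (k q u : ℕ) : (halfLabel k q u).1 ≤ max q (k - 1) := by
  unfold halfLabel
  split_ifs <;> dsimp only <;> omega

lemma halfLabel_conflict {k : ℕ} (hk : 1 ≤ k) (x : ℕ → ℕ) :
    (∃ q < k, (halfLabel k q (x q)).1 = 0) ∨
    ∃ q < k, ∃ q' < k, 0 < (halfLabel k q (x q)).1 ∧
      (halfLabel k q (x q)).1 = (halfLabel k q' (x q')).1 ∧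
      (halfLabel k q (x q)).2 ≠ (halfLabel k q' (x q')).2 := by
  by_contra! ⟨hzero, hconf⟩
  have hlow : ∀ q < k, x q < k := by
    intro q
    induction q using Nat.strong_induction_on with
    | _ q ih =>
      intro hq
      by_contra! hhigh
      obtain ⟨hle, hside⟩ := halfLabel_of_le (q := q) hhigh
      obtain ⟨j, b, hjb⟩ : ∃ j b, halfLabel k q (x q) = (j + 1, b) :=
        ⟨_, _, Prod.ext (Nat.succ_pred_eq_of_ne_zero (hzero q hq)).symm rfl⟩
      rw [hjb] at hle hside
      have hA := halfLabel_of_lt (ih j (by omega) (by omega)) (show j + 1 < k by omega)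
      have := hconf j (by omega) q hq
      simp [hA, hjb, hside] at this
  rcases Nat.lt_or_ge k 2 with hk1 | hk2
  · have := halfLabel_last (hlow (k - 1) (by omega))
    exact hzero (k - 1) (by omega) (by simp [this]; omega)
  · have hA := halfLabel_of_lt (hlow (k - 2) (by omega)) (show k - 2 + 1 < k by omega)
    have hB := halfLabel_last (hlow (k - 1) (by omega))
    have := hconf (k - 2) (by omega) (k - 1) (by omega)
    simp [hA, hB] at this
    omega

/-- Parts `p < k` form the first half and parts `k ≤ p < 2k` the second. Blocks `1, …, k - 1`
of the first half keep their numbers, those of the second half are shifted by `k - 1`, and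
the leftover vertices of the two halves become the two sides of the shared block `0`. -/
def label (k p u : ℕ) : ℕ × Bool :=
  if p < k then
    if (halfLabel k p u).1 = 0 then (0, true) else halfLabel k p u
  else
    if (halfLabel k (p - k) u).1 = 0 then (0, false)
    else ((halfLabel k (p - k) u).1 + (k - 1), (halfLabel k (p - k) u).2)

lemma label_fst_lt {k p : ℕ} (u : ℕ) (hp : p < k + k) : (label k p u).1 < k + k - 1 := by
  have h1 := halfLabel_fst_le k p u
  have h2 := halfLabel_fst_le k (p - k) u
  unfold label
  split_ifs <;> simp <;> omega

lemma label_snd_eq_of_fst_eq {k p u u' : ℕ} (h : (label k p u).1 = (label k p u').1) :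
    (label k p u).2 = (label k p u').2 := by
  unfold label halfLabel at *
  split_ifs at * <;> simp_all <;> omega

lemma label_of_lt {k p u : ℕ} (hp : p < k) (h : 0 < (halfLabel k p u).1) :
    label k p u = halfLabel k p u := by
  simp [label, hp, h.ne']

lemma label_add_of_pos {k q u : ℕ} (h : 0 < (halfLabel k q u).1) :
    label k (q + k) u = ((halfLabel k q u).1 + (k - 1), (halfLabel k q u).2) := by
  simp [label, h.ne']

lemma label_conflict {k : ℕ} (hk : 1 ≤ k) (x : ℕ → ℕ) :
    ∃ p < k + k, ∃ p' < k + k, (label k p (x p)).1 = (label k p' (x p')).1 ∧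
      (label k p (x p)).2 ≠ (label k p' (x p')).2 := by
  rcases halfLabel_conflict hk x with ⟨q, hq, h0⟩ | ⟨q, hq, q', hq', hpos, hfst, hsnd⟩
  · rcases halfLabel_conflict hk (fun q => x (q + k)) with
      ⟨q', hq', h0'⟩ | ⟨q', hq', q'', hq'', hpos, hfst, hsnd⟩
    · refine ⟨q, by omega, q' + k, by omega, ?_⟩
      simp_all [label]
    · refine ⟨q' + k, by omega, q'' + k, by omega, ?_⟩
      rw [label_add_of_pos hpos, label_add_of_pos (hfst ▸ hpos)]
      simp_all
  · refine ⟨q, by omega, q', by omega, ?_⟩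
    rw [label_of_lt hq hpos, label_of_lt hq' (hfst ▸ hpos)]
    exact ⟨hfst, hsnd⟩

/-- The `s`-th vertex (`s < k`) on side `b` of block `j` of a half, as a pair (part, vertex). -/
def halfSection (k j : ℕ) (b : Bool) (s : ℕ) : ℕ × ℕ :=
  if b then (j - 1, s)
  else if j + 1 < k then (if s + j + 1 < k then (j, k + s) else (j + 1, k - 1 + s))
  else (k - 1, s)

lemma halfLabel_halfSection {k j s : ℕ} (b : Bool) (hj : j < k) (hb : b = true → 1 ≤ j)
    (hs : s < k) : halfLabel k (halfSection k j b s).1 (halfSection k j b s).2 = (j, b) := by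
  unfold halfSection
  split_ifs <;> dsimp only [halfLabel] <;> split_ifs <;> simp_all <;> omega

lemma halfSection_lt {k j s : ℕ} (b : Bool) (hj : j < k) (hs : s < k) :
    (halfSection k j b s).1 < k ∧ (halfSection k j b s).2 < 2 * k - 1 := by
  unfold halfSection
  split_ifs <;> simp <;> omega

lemma halfSection_injective (k j : ℕ) (b : Bool) : Function.Injective (halfSection k j b) := by
  intro s s' h
  unfold halfSection at h
  split_ifs at h <;> simp at h <;> omega

def labelSection (k i : ℕ) (b : Bool) (s : ℕ) : ℕ × ℕ :=
  if i = 0 then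
    if b then halfSection k 0 false s else Prod.map (· + k) id (halfSection k 0 false s)
  else if i < k then halfSection k i b s
  else Prod.map (· + k) id (halfSection k (i + 1 - k) b s)

lemma label_labelSection {k i s : ℕ} (b : Bool) (hi : i < k + k - 1) (hs : s < k) :
    label k (labelSection k i b s).1 (labelSection k i b s).2 = (i, b) := by
  unfold labelSection
  split_ifs with h0 hb hik
  · have h := halfLabel_halfSection false (show 0 < k by omega) (by simp) hs
    have hp := (halfSection_lt false (show 0 < k by omega) hs).1
    simp [label, hp, h, h0, hb]
  · have h := halfLabel_halfSection false (show 0 < k by omega) (by simp) hs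
    simp [label, h, h0, hb]
  · have h := halfLabel_halfSection b hik (fun _ => by omega) hs
    have hp := (halfSection_lt b hik hs).1
    rw [label_of_lt hp (by rw [h]; omega), h]
  · have h := halfLabel_halfSection b (show i + 1 - k < k by omega) (fun _ => by omega) hs
    rw [Prod.map_fst, Prod.map_snd, id, label_add_of_pos (by rw [h]; omega), h]
    simp
    omega

lemma labelSection_lt {k i s : ℕ} (b : Bool) (hi : i < k + k - 1) (hs : s < k) :
    (labelSection k i b s).1 < k + k ∧ (labelSection k i b s).2 < k + k - 1 := by
  unfold labelSection
  split_ifs with h0 _ hik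
  · have := halfSection_lt false (show 0 < k by omega) hs; omega
  · have := halfSection_lt false (show 0 < k by omega) hs; simp; omega
  · have := halfSection_lt b hik hs; omega
  · have := halfSection_lt b (show i + 1 - k < k by omega) hs; simp; omega

lemma labelSection_injective (k i : ℕ) (b : Bool) :
    Function.Injective (labelSection k i b) := by
  have hshift : Function.Injective (Prod.map (· + k) id : ℕ × ℕ → ℕ × ℕ) :=
    Prod.map_injective.2 ⟨add_left_injective k, Function.injective_id⟩
  intro s s' h
  unfold labelSection at h
  split_ifs at h <;> first
    | exact halfSection_injective _ _ _ h
    | exact halfSection_injective _ _ _ (hshift h)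

def baseLabel (k : ℕ) (v : Fin (k + k) × Fin (k + k - 1)) : Fin (k + k - 1) × Bool :=
  (⟨(label k v.1 v.2).1, label_fst_lt _ v.1.isLt⟩, (label k v.1 v.2).2)

def baseSection (k : ℕ) (y : Fin (k + k - 1) × Bool) (s : Fin k) :
    Fin (k + k) × Fin (k + k - 1) :=
  (⟨_, (labelSection_lt y.2 y.1.isLt s.isLt).1⟩, ⟨_, (labelSection_lt y.2 y.1.isLt s.isLt).2⟩)

lemma card_filter_baseLabel_eq (k : ℕ) (y : Fin (k + k - 1) × Bool) :
    #{v | baseLabel k v = y} = k :=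
  card_filter_eq_of_section (baseLabel k) (baseSection k)
    (fun y s => by
      have h := label_labelSection y.2 y.1.isLt s.isLt
      ext <;> simp [baseLabel, baseSection, h])
    (fun y s s' h => Fin.ext (labelSection_injective k y.1 y.2
      (Prod.ext (Fin.ext_iff.1 (Prod.ext_iff.1 h).1) (Fin.ext_iff.1 (Prod.ext_iff.1 h).2))))
    (by simp only [Fintype.card_prod, Fintype.card_fin, Fintype.card_bool]; ring) y

lemma baseLabel_snd_eq_of_fst_eq {k : ℕ} (p : Fin (k + k)) (x y : Fin (k + k - 1))
    (h : (baseLabel k (p, x)).1 = (baseLabel k (p, y)).1) :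
    (baseLabel k (p, x)).2 = (baseLabel k (p, y)).2 :=
  label_snd_eq_of_fst_eq (Fin.ext_iff.1 h)

lemma exists_baseLabel_conflict {k : ℕ} (hk : 1 ≤ k) (f : Fin (k + k) → Fin (k + k - 1)) :
    ∃ i j, (baseLabel k (i, f i)).1 = (baseLabel k (j, f j)).1 ∧
      (baseLabel k (i, f i)).2 ≠ (baseLabel k (j, f j)).2 := by
  obtain ⟨p, hp, p', hp', h1, h2⟩ :=
    label_conflict hk fun p => if h : p < k + k then (f ⟨p, h⟩ : ℕ) else 0
  simp only [hp, hp', dif_pos] at h1 h2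
  exact ⟨⟨p, hp⟩, ⟨p', hp'⟩, Fin.ext h1, h2⟩

end IndependentTransversal

open IndependentTransversal in
theorem stmt10_general (r n : ℕ) (hreven : Even r) (hr : 2 ≤ r)
    (hdvd : (r - 1) ∣ n) :
    ∃ G : SimpleGraph (Fin r × Fin n), IsPartite G ∧
      -- G is the vertex-disjoint union of r-1 complete bipartite graphs with
      -- both sides of size rn/(2r-2)
      (∃ A B : Fin (r - 1) → Finset (Fin r × Fin n),
        (∀ i, Disjoint (A i) (B i)) ∧
        (∀ i j, i ≠ j → Disjoint (A i ∪ B i) (A j ∪ B j)) ∧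
        (∀ v : Fin r × Fin n, ∃ i, v ∈ A i ∨ v ∈ B i) ∧
        (∀ i, (A i).card = r * n / (2 * r - 2)) ∧
        (∀ i, (B i).card = r * n / (2 * r - 2)) ∧
        (∀ u v : Fin r × Fin n,
          G.Adj u v ↔ ∃ i, (u ∈ A i ∧ v ∈ B i) ∨ (u ∈ B i ∧ v ∈ A i))) ∧
      -- so G is rn/(2r-2)-regular
      (∀ v, (G.neighborSet v).ncard = r * n / (2 * r - 2)) ∧
      ¬ HasIT G := by
  obtain ⟨k, rfl⟩ := hreven
  obtain ⟨t, rfl⟩ := hdvd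
  have hdeg : (k + k) * ((k + k - 1) * t) / (2 * (k + k) - 2) = k * t := by
    rw [show 2 * (k + k) - 2 = 2 * (k + k - 1) by omega,
      show (k + k) * ((k + k - 1) * t) = k * t * (2 * (k + k - 1)) by ring]
    exact Nat.mul_div_cancel _ (by omega)
  have hclass : ∀ y, #{v | blowup (baseLabel k) v = y} = k * t := fun y => by
    rw [card_filter_blowup_eq, card_filter_baseLabel_eq]
  rw [hdeg]
  refine ⟨blockGraph (blowup (baseLabel k)),
    isPartite_blockGraph _ fun i x y => baseLabel_snd_eq_of_fst_eq i x.divNat y.divNat,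
    exists_blockGraph_decomposition _ hclass, fun v => ?_,
    not_hasIT_blockGraph _ fun f => exists_baseLabel_conflict (by omega) fun i => (f i).divNat⟩
  rw [neighborSet_blockGraph, Set.ncard_coe_finset, hclass]

theorem stmt10 (r n : ℕ) (hreven : Even r) (hr : 2 ≤ r) (hn : 0 < n)
    (hdvd : (r - 1) ∣ n) :
    ∃ G : SimpleGraph (Fin r × Fin n), IsPartite G ∧
      -- G is the vertex-disjoint union of r-1 complete bipartite graphs with
      -- both sides of size rn/(2r-2)
      (∃ A B : Fin (r - 1) → Finset (Fin r × Fin n),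
        (∀ i, Disjoint (A i) (B i)) ∧
        (∀ i j, i ≠ j → Disjoint (A i ∪ B i) (A j ∪ B j)) ∧
        (∀ v : Fin r × Fin n, ∃ i, v ∈ A i ∨ v ∈ B i) ∧
        (∀ i, (A i).card = r * n / (2 * r - 2)) ∧
        (∀ i, (B i).card = r * n / (2 * r - 2)) ∧
        (∀ u v : Fin r × Fin n,
          G.Adj u v ↔ ∃ i, (u ∈ A i ∧ v ∈ B i) ∨ (u ∈ B i ∧ v ∈ A i))) ∧
      -- so G is rn/(2r-2)-regular
      (∀ v, (G.neighborSet v).ncard = r * n / (2 * r - 2)) ∧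
      ¬ HasIT G :=
  stmt10_general r n hreven hr hdvd
end

section
/- Let G be an r-partite graph with vertex partition V_1 ∪ ⋯ ∪ V_r (r ≥ 2), and let I = {v_1, w_1, …, v_{r−1}, w_{r−1}} be an induced matching configuration in G in which v_i is adjacent to w_i for each i ∈ [r−1]. Then for every index q ∈ [r] there is a V_q-avoiding partial independent transversal T = {s_1, …, s_{r−1}} in G such that s_j = v_j or s_j = w_j for every j ∈ [r−1]. -/
/-!
Root the tree of parts at `q`. Every matching edge `v i w i` joins two adjacent parts of this
tree; let `s i` be its endpoint lying in the part farther from `q`. In a rooted tree every vertex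
other than the root has exactly one edge to its parent, and the edges of the tree correspond
bijectively to the matching edges, so the parts of the `s i` are exactly the parts other than
`q`, each met once. Independence of `{s i}` is inherited from the induced matching.
-/

/-- The auxiliary graph on the part indices: `a ~ b` iff some matching edge `v i w i`
joins part `a` to part `b`. -/
def auxGraph {V : Type*} {r : ℕ} (part : V → Fin r) (v w : Fin (r - 1) → V) :
    SimpleGraph (Fin r) :=
  SimpleGraph.fromRel (fun a b => ∃ i, part (v i) = a ∧ part (w i) = b)

/-- The set `{v i, w i : i ∈ [r-1]}` is an induced matching configuration in the
`r`-partite graph `G` with parts given by `part`: it consists of `2(r-1)` distinct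
vertices, induces exactly the perfect matching `{v i w i}`, meets every part, and the
multigraph on the part indices obtained from the matching edges is a tree (no loops,
no parallel edges, and the underlying simple graph is a tree). -/
def IsIMC {V : Type*} {r : ℕ} (G : SimpleGraph V) (part : V → Fin r)
    (v w : Fin (r - 1) → V) : Prop :=
  (∀ i, G.Adj (v i) (w i)) ∧
  (∀ i, v i ≠ w i) ∧
  (∀ i j, i ≠ j → v i ≠ v j ∧ w i ≠ w j ∧ v i ≠ w j) ∧
  (∀ i j, ∀ a b, (a = v i ∨ a = w i) → (b = v j ∨ b = w j) → G.Adj a b →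
    i = j ∧ ((a = v i ∧ b = w i) ∨ (a = w i ∧ b = v i))) ∧
  (∀ q : Fin r, ∃ i, part (v i) = q ∨ part (w i) = q) ∧
  (∀ i, part (v i) ≠ part (w i)) ∧
  (∀ i j, i ≠ j →
    ¬((part (v i) = part (v j) ∧ part (w i) = part (w j)) ∨
      (part (v i) = part (w j) ∧ part (w i) = part (v j)))) ∧
  (auxGraph part v w).IsTree

open Function

namespace SimpleGraph

variable {W : Type*} {T : SimpleGraph W}

theorem IsTree.existsUnique_adj_dist_add_one_eq (hT : T.IsTree) {q x : W} (hx : x ≠ q) :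
    ∃! y, T.Adj x y ∧ T.dist q y + 1 = T.dist q x := by
  obtain ⟨p, -, hp⟩ := hT.connected.exists_path_of_dist q x
  have hnil : ¬p.Nil := fun h => hx h.eq.symm
  refine ⟨p.penultimate, ⟨(p.adj_penultimate hnil).symm, ?_⟩, ?_⟩
  · have hle := dist_le p.dropLast
    have hlen := Walk.length_dropLast_add_one hnil
    rcases hT.dist_eq_dist_add_one_of_adj q (p.adj_penultimate hnil) with h | h <;> omega
  · rintro y ⟨hadj, hy⟩
    obtain ⟨p', -, hp'⟩ := hT.connected.exists_path_of_dist q y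
    have hpath : (p'.concat hadj.symm).IsPath :=
      Walk.isPath_of_length_eq_dist _ (by rw [Walk.length_concat]; omega)
    rw [← (hT.existsUnique_path q x).unique hpath (p.isPath_of_length_eq_dist hp),
      Walk.penultimate_concat]

noncomputable def farEnd (T : SimpleGraph W) (q a b : W) : W :=
  if T.dist q b < T.dist q a then a else b

noncomputable def nearEnd (T : SimpleGraph W) (q a b : W) : W :=
  if T.dist q b < T.dist q a then b else a

theorem sym2_farEnd_nearEnd (q a b : W) : s(T.farEnd q a b, T.nearEnd q a b) = s(a, b) := by
  unfold farEnd nearEnd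
  split_ifs <;> simp [Sym2.eq_swap]

theorem Adj.farEnd_nearEnd {q a b : W} (h : T.Adj a b) :
    T.Adj (T.farEnd q a b) (T.nearEnd q a b) := by
  unfold farEnd nearEnd
  split_ifs
  exacts [h, h.symm]

theorem IsTree.dist_nearEnd_add_one (hT : T.IsTree) (q : W) {a b : W} (h : T.Adj a b) :
    T.dist q (T.nearEnd q a b) + 1 = T.dist q (T.farEnd q a b) := by
  unfold farEnd nearEnd
  split_ifs <;> rcases hT.dist_eq_dist_add_one_of_adj q h with h | h <;> omega

theorem IsTree.farEnd_ne_root (hT : T.IsTree) (q : W) {a b : W} (h : T.Adj a b) :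
    T.farEnd q a b ≠ q := by
  intro hq
  have := hT.dist_nearEnd_add_one q h
  rw [hq, dist_self] at this
  omega

theorem IsTree.existsUnique_farEnd_eq (hT : T.IsTree) {ι : Type*} {a b : ι → W}
    (hadj : ∀ i, T.Adj (a i) (b i)) (hinj : Injective fun i => s(a i, b i))
    (hcover : ∀ x y, T.Adj x y → ∃ i, s(a i, b i) = s(x, y)) {q x : W} (hx : x ≠ q) :
    ∃! i, T.farEnd q (a i) (b i) = x := by
  obtain ⟨y, ⟨hxy, hy⟩, hparent⟩ := hT.existsUnique_adj_dist_add_one_eq hx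
  have hedge : ∀ i, T.farEnd q (a i) (b i) = x → s(a i, b i) = s(x, y) := by
    intro i hi
    have hnear :=
      hparent _ ⟨hi ▸ (hadj i).farEnd_nearEnd, hi ▸ hT.dist_nearEnd_add_one q (hadj i)⟩
    rw [← sym2_farEnd_nearEnd, hi, hnear]
  obtain ⟨i, hi⟩ := hcover x y hxy
  refine ⟨i, ?_, fun j hj => hinj ((hedge j hj).trans hi.symm)⟩
  have hnear := hT.dist_nearEnd_add_one q (hadj i)
  rw [← sym2_farEnd_nearEnd q, Sym2.eq_iff] at hi
  rcases hi with ⟨hfar, -⟩ | ⟨hfar, hnear'⟩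
  · exact hfar
  · rw [hfar, hnear'] at hnear
    omega

end SimpleGraph

open SimpleGraph

theorem exists_sym2_eq_of_auxGraph_adj {V : Type*} {r : ℕ} {part : V → Fin r}
    {v w : Fin (r - 1) → V} (x y : Fin r) (h : (auxGraph part v w).Adj x y) :
    ∃ i, s(part (v i), part (w i)) = s(x, y) := by
  obtain ⟨-, ⟨i, hv, hw⟩ | ⟨i, hv, hw⟩⟩ := (fromRel_adj _ _ _).mp h
  · exact ⟨i, by rw [hv, hw]⟩
  · exact ⟨i, by rw [hv, hw, Sym2.eq_swap]⟩

namespace IsIMC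

variable {V : Type*} {r : ℕ} {G : SimpleGraph V} {part : V → Fin r}
  {v w : Fin (r - 1) → V}

theorem isTree (h : IsIMC G part v w) : (auxGraph part v w).IsTree := h.2.2.2.2.2.2.2

theorem auxGraph_adj (h : IsIMC G part v w) (i : Fin (r - 1)) :
    (auxGraph part v w).Adj (part (v i)) (part (w i)) :=
  (fromRel_adj _ _ _).mpr ⟨h.2.2.2.2.2.1 i, Or.inl ⟨i, rfl, rfl⟩⟩

theorem injective_sym2 (h : IsIMC G part v w) :
    Injective fun i => s(part (v i), part (w i)) := by
  intro i j hij
  by_contra hne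
  exact h.2.2.2.2.2.2.1 i j hne (Sym2.eq_iff.mp hij)

theorem not_adj_of_ne (h : IsIMC G part v w) {s : Fin (r - 1) → V}
    (hs : ∀ j, s j = v j ∨ s j = w j) {i j : Fin (r - 1)} (hij : i ≠ j) :
    ¬G.Adj (s i) (s j) :=
  fun hadj => hij (h.2.2.2.1 i j _ _ (hs i) (hs j) hadj).1

end IsIMC

theorem stmt14_general {V : Type*} (r : ℕ) (G : SimpleGraph V)
    (part : V → Fin r)
    (v w : Fin (r - 1) → V) (himc : IsIMC G part v w) (q : Fin r) :
    ∃ s : Fin (r - 1) → V,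
      (∀ j, s j = v j ∨ s j = w j) ∧
      -- T = {s j} is an independent set
      (∀ i j, i ≠ j → ¬ G.Adj (s i) (s j)) ∧
      -- T avoids part q and has exactly one vertex in every other part
      (∀ i, part (s i) ≠ q) ∧
      (∀ q' : Fin r, q' ≠ q → ∃! i, part (s i) = q') := by
  set T := auxGraph part v w
  let s : Fin (r - 1) → V := fun i =>
    if T.dist q (part (w i)) < T.dist q (part (v i)) then v i else w i
  have hs : ∀ j, s j = v j ∨ s j = w j := fun j => by
    dsimp only [s]
    split_ifs <;> simp
  have hpart_s : ∀ i, part (s i) = T.farEnd q (part (v i)) (part (w i)) := fun i =>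
    apply_ite part _ _ _
  refine ⟨s, hs, fun i j hij => himc.not_adj_of_ne hs hij, fun i => ?_, fun q' hq' => ?_⟩
  · rw [hpart_s]
    exact himc.isTree.farEnd_ne_root q (himc.auxGraph_adj i)
  · simp only [hpart_s]
    exact himc.isTree.existsUnique_farEnd_eq himc.auxGraph_adj himc.injective_sym2
      exists_sym2_eq_of_auxGraph_adj hq'

theorem stmt14 {V : Type*} (r : ℕ) (hr : 2 ≤ r) (G : SimpleGraph V)
    (part : V → Fin r) (hpart : ∀ u u' : V, G.Adj u u' → part u ≠ part u')
    (v w : Fin (r - 1) → V) (himc : IsIMC G part v w) (q : Fin r) :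
    ∃ s : Fin (r - 1) → V,
      (∀ j, s j = v j ∨ s j = w j) ∧
      -- T = {s j} is an independent set
      (∀ i j, i ≠ j → ¬ G.Adj (s i) (s j)) ∧
      -- T avoids part q and has exactly one vertex in every other part
      (∀ i, part (s i) ≠ q) ∧
      (∀ q' : Fin r, q' ≠ q → ∃! i, part (s i) = q') :=
  stmt14_general r G part v w himc q
end

section
/- Let G be an r-partite graph with parts of size n (r ≥ 2) containing no independent transversal, and let I = {a_1, b_1, …, a_{r−1}, b_{r−1}} be an induced matching configuration in G in which a_i is adjacent to b_i for each i ∈ [r−1]. For v ∈ I let A_v = {y ∈ V(G) : N(y) ∩ I = {v}}. Suppose v_i ∈ A_{a_i} and w_i ∈ A_{b_i} for i ∈ [r−1], and the set {v_1, w_1, …, v_{r−1}, w_{r−1}} contains no edge of G other than possibly the pairs v_i w_i (i.e., it is independent in G − E where E = {v_i w_i : i ∈ [r−1]}). Then {v_i, w_i : i ∈ [r−1]} is an induced matching configuration in G. -/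
/-!
Start from the configuration `(b i, a i)`, which is `I` itself, and replace its pairs by
`(v i, w i)` one at a time, keeping the auxiliary graph on the parts a tree. A replacement
deletes the edge `e` of pair `i` and adds the edge between the parts of `v i` and `w i`, which
gives a tree again as soon as these two parts lie on different sides of `e`. If, say, the part
of `w i` were on the side of `b i`, root the tree there and give every other part the end, lying
in it, of the pair joining it to its parent: together with `w i` this is an independent
transversal. The same construction rooted at `w i` forces `v i ~ w i`, and since a tree on the
`r` parts has exactly `r - 1` edges, no pair is a loop and no two pairs are parallel.
-/

open Function SimpleGraph

namespace SimpleGraph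

variable {V : Type*} {G : SimpleGraph V}

theorem Reachable.reachable_deleteEdges_or {u x : V} (h : G.Reachable u x) (y : V) :
    (G.deleteEdges {s(x, y)}).Reachable u x ∨ (G.deleteEdges {s(x, y)}).Reachable u y := by
  obtain ⟨p⟩ := h
  induction p with
  | nil => exact Or.inl .rfl
  | @cons u u' x hadj _ ih =>
    by_cases he : s(u, u') = s(x, y)
    · rcases Sym2.eq_iff.1 he with ⟨rfl, -⟩ | ⟨rfl, -⟩
      · exact Or.inl .rfl
      · exact Or.inr .rfl
    · have hK : (G.deleteEdges {s(x, y)}).Adj u u' := deleteEdges_adj.2 ⟨hadj, he⟩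
      exact ih.imp hK.reachable.trans hK.reachable.trans

theorem Reachable.exists_adj_reachable_deleteEdges {u v : V} (h : G.Reachable u v) (huv : u ≠ v) :
    ∃ w, G.Adj u w ∧ (G.deleteEdges {s(u, w)}).Reachable w v := by
  obtain ⟨p, hp⟩ := h.exists_isPath
  cases p with
  | nil => exact absurd rfl huv
  | cons hadj q =>
    refine ⟨_, hadj, reachable_deleteEdges_iff_exists_walk.2 ⟨q, fun he => ?_⟩⟩
    exact ((Walk.cons_isPath_iff _ _).1 hp).2 (q.fst_mem_support_of_mem_edges he)

theorem IsTree.isTree_deleteEdges_sup_edge (hG : G.IsTree) {x y x' y' : V}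
    (h : ¬(G.deleteEdges {s(x, y)}).Reachable x' y') :
    (G.deleteEdges {s(x, y)} ⊔ edge x' y').IsTree := by
  set K := G.deleteEdges {s(x, y)}
  refine ⟨?_, (hG.isAcyclic.anti (deleteEdges_le _)).sup_edge_of_not_reachable h⟩
  have hK (u : V) : K.Reachable u x ∨ K.Reachable u y :=
    (hG.connected u x).reachable_deleteEdges_or y
  have hx'y' : (K ⊔ edge x' y').Reachable x' y' := by
    refine Adj.reachable (Or.inr ((edge_adj _ _ _ _).2 ⟨Or.inl ⟨rfl, rfl⟩, ?_⟩))
    rintro rfl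
    exact h .rfl
  have hxy : (K ⊔ edge x' y').Reachable x y := by
    rcases hK x' with h1 | h1 <;> rcases hK y' with h2 | h2
    · exact absurd (h1.trans h2.symm) h
    · exact ((h1.symm.mono le_sup_left).trans hx'y').trans (h2.mono le_sup_left)
    · exact ((h2.symm.mono le_sup_left).trans hx'y'.symm).trans (h1.mono le_sup_left)
    · exact absurd (h1.trans h2.symm) h
  refine (connected_iff_exists_forall_reachable _).2 ⟨x, fun u => ?_⟩
  rcases hK u with hu | hu
  · exact (hu.mono le_sup_left).symm
  · exact hxy.trans (hu.mono le_sup_left).symm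

end SimpleGraph

section MatchingPairs

variable {α ι : Type*}

def pairEnd (v w : ι → α) (i : ι) : Bool → α
  | true => v i
  | false => w i

def pairEdge {β : Type*} (part : α → β) (v w : ι → α) (i : ι) : Sym2 β :=
  s(part (v i), part (w i))

theorem pairEnd_swap (v w : ι → α) (i : ι) (s : Bool) : pairEnd w v i s = pairEnd v w i !s := by
  cases s <;> rfl

theorem pairEnd_piecewise (S : Finset ι) [DecidablePred (· ∈ S)] (v w v' w' : ι → α) (i : ι)
    (s : Bool) :
    pairEnd (S.piecewise v v') (S.piecewise w w') i s =
      if i ∈ S then pairEnd v w i s else pairEnd v' w' i s := by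
  cases s <;> simp only [pairEnd, Finset.piecewise]

theorem pairEdge_eq {β : Type*} (part : α → β) (v w : ι → α) (i : ι) (s : Bool) :
    pairEdge part v w i = s(part (pairEnd v w i s), part (pairEnd v w i !s)) := by
  cases s
  · exact Sym2.eq_swap
  · rfl

/-- The paper's independence of `{v i, w i}` in `G - {v i w i}`. -/
def CrossIndependent (G : SimpleGraph α) (v w : ι → α) : Prop :=
  ∀ i j, i ≠ j → ∀ s t, ¬G.Adj (pairEnd v w i s) (pairEnd v w j t)

/-- `pairEnd v w i s ∈ A_(pairEnd a b i s)` for all `i, s`, where `I = {a j, b j}`. -/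
def IsPrivateNeighbors (G : SimpleGraph α) (a b v w : ι → α) : Prop :=
  ∀ i s j t, G.Adj (pairEnd v w i s) (pairEnd a b j t) ↔ j = i ∧ t = s

variable {G : SimpleGraph α}

theorem crossIndependent_of_forall {v w : ι → α}
    (h : ∀ i j, i ≠ j → ¬G.Adj (v i) (v j) ∧ ¬G.Adj (w i) (w j) ∧ ¬G.Adj (v i) (w j)) :
    CrossIndependent G v w := by
  intro i j hij s t
  cases s <;> cases t
  exacts [(h i j hij).2.1, fun e => (h j i hij.symm).2.2 e.symm, (h i j hij).2.2, (h i j hij).1]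

theorem isPrivateNeighbors_of_forall {a b v w : ι → α}
    (hv : ∀ i, (∀ j, G.Adj (v i) (a j) ↔ j = i) ∧ ∀ j, ¬G.Adj (v i) (b j))
    (hw : ∀ i, (∀ j, G.Adj (w i) (b j) ↔ j = i) ∧ ∀ j, ¬G.Adj (w i) (a j)) :
    IsPrivateNeighbors G a b v w := by
  intro i s j t
  cases s <;> cases t <;> simp [pairEnd, hv, hw]

theorem IsPrivateNeighbors.injective {a b v w : ι → α} (h : IsPrivateNeighbors G a b v w) :
    Injective (uncurry (pairEnd v w)) := by
  rintro ⟨i, s⟩ ⟨j, t⟩ he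
  have hadj := (h j t j t).2 ⟨rfl, rfl⟩
  rw [← show pairEnd v w i s = pairEnd v w j t from he] at hadj
  obtain ⟨rfl, rfl⟩ := (h i s j t).1 hadj
  rfl

theorem CrossIndependent.piecewise_swap {a b v w : ι → α} (S : Finset ι) [DecidablePred (· ∈ S)]
    (hc : CrossIndependent G v w) (hvw : IsPrivateNeighbors G a b v w)
    (hba : IsPrivateNeighbors G a b b a) :
    CrossIndependent G (S.piecewise v b) (S.piecewise w a) := by
  have hI : ∀ i j, i ≠ j → ∀ s t,
      ¬G.Adj (pairEnd (S.piecewise v b) (S.piecewise w a) i s) (pairEnd b a j t) := by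
    intro i j hij s t hadj
    rw [pairEnd_swap a b, pairEnd_piecewise] at hadj
    split_ifs at hadj
    exacts [hij ((hvw _ _ _ _).1 hadj).1.symm, hij ((hba _ _ _ _).1 hadj).1.symm]
  intro i j hij s t
  rw [pairEnd_piecewise S v w b a j]
  split_ifs with hj
  · rw [pairEnd_piecewise S v w b a i]
    split_ifs with hi
    · exact hc i j hij s t
    · refine fun hadj => hI j i hij.symm t s ?_
      rw [pairEnd_piecewise, if_pos hj]
      exact hadj.symm
  · exact hI i j hij s t

end MatchingPairs

section auxGraph

variable {α : Type*} {r : ℕ} {part : α → Fin r} {v w : Fin (r - 1) → α}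

theorem auxGraph_adj_iff {p q : Fin r} :
    (auxGraph part v w).Adj p q ↔
      p ≠ q ∧ ∃ i s, part (pairEnd v w i s) = p ∧ part (pairEnd v w i !s) = q := by
  simp only [auxGraph, fromRel_adj]
  constructor
  · rintro ⟨hpq, ⟨i, h⟩ | ⟨i, hq, hp⟩⟩
    exacts [⟨hpq, i, true, h⟩, ⟨hpq, i, false, hp, hq⟩]
  · rintro ⟨hpq, i, s, h⟩
    cases s
    exacts [⟨hpq, .inr ⟨i, h.2, h.1⟩⟩, ⟨hpq, .inl ⟨i, h⟩⟩]

theorem auxGraph_comm : auxGraph part v w = auxGraph part w v := by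
  ext p q
  simp only [auxGraph_adj_iff, pairEnd_swap w v]
  exact and_congr_right fun _ =>
    ⟨fun ⟨i, s, h⟩ => ⟨i, !s, by simpa using h⟩, fun ⟨i, s, h⟩ => ⟨i, !s, by simpa using h⟩⟩

theorem edgeSet_auxGraph_subset :
    (auxGraph part v w).edgeSet ⊆
      ((Finset.univ.filter fun i => ¬(pairEdge part v w i).IsDiag).image
        (pairEdge part v w) :) := by
  intro e he
  induction e using Sym2.ind with
  | h p q =>
    obtain ⟨hpq, i, s, rfl, rfl⟩ := auxGraph_adj_iff.1 he
    simp only [Finset.coe_image, Finset.coe_filter, Set.mem_image, Set.mem_ofPred_eq]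
    exact ⟨i, by simpa [pairEdge_eq part v w i s], pairEdge_eq part v w i s⟩

theorem ncard_edgeSet_auxGraph_le_card :
    (auxGraph part v w).edgeSet.ncard ≤
      ((Finset.univ.filter fun i => ¬(pairEdge part v w i).IsDiag).image
        (pairEdge part v w)).card :=
  (Set.ncard_le_ncard edgeSet_auxGraph_subset (Finset.finite_toSet _)).trans_eq
    (Set.ncard_coe_finset _)

theorem isTree_auxGraph_of_connected (h : (auxGraph part v w).Connected) :
    (auxGraph part v w).IsTree := by
  refine isTree_iff_connected_and_card.2 ⟨h, le_antisymm ?_ h.card_vert_le_card_edgeSet_add_one⟩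
  have hr : 0 < r := Fin.pos_iff_nonempty.2 h.nonempty
  have : (auxGraph part v w).edgeSet.ncard ≤ r - 1 := ncard_edgeSet_auxGraph_le_card.trans
    (Finset.card_image_le.trans ((Finset.card_filter_le _ _).trans_eq (Finset.card_fin _)))
  rw [Nat.card_coe_set_eq, Nat.card_eq_fintype_card (α := Fin r), Fintype.card_fin]
  omega

/-- The tree has `r - 1` edges, one for each pair. -/
theorem pairEdge_injective_of_isTree (hT : (auxGraph part v w).IsTree) :
    (∀ i, part (v i) ≠ part (w i)) ∧ Injective (pairEdge part v w) := by
  set D := Finset.univ.filter fun i => ¬(pairEdge part v w i).IsDiag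
  have hcard := (isTree_iff_connected_and_card.1 hT).2
  rw [Nat.card_coe_set_eq, Nat.card_eq_fintype_card (α := Fin r), Fintype.card_fin] at hcard
  have h1 : (auxGraph part v w).edgeSet.ncard ≤ (D.image (pairEdge part v w)).card :=
    ncard_edgeSet_auxGraph_le_card
  have h2 : (D.image (pairEdge part v w)).card ≤ D.card := Finset.card_image_le
  have h3 : D.card ≤ r - 1 := (Finset.card_filter_le _ _).trans_eq (by simp)
  have hD : D = Finset.univ := D.eq_univ_of_card (by simp only [Fintype.card_fin]; omega)
  have hinj := Finset.card_image_iff.1 (le_antisymm h2 (by omega))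
  refine ⟨fun i h => ?_, fun i j hij => hinj (by simp [hD]) (by simp [hD]) hij⟩
  have : i ∈ D := hD ▸ Finset.mem_univ i
  simp [D, pairEdge, h] at this

theorem not_reachable_deleteEdges_pairEdge_of_isTree (hT : (auxGraph part v w).IsTree)
    (i : Fin (r - 1)) (s : Bool) :
    ¬((auxGraph part v w).deleteEdges {pairEdge part v w i}).Reachable
      (part (pairEnd v w i s)) (part (pairEnd v w i !s)) := by
  rw [pairEdge_eq part v w i s, ← isBridge_iff]
  refine isAcyclic_iff_forall_adj_isBridge.1 hT.isAcyclic (auxGraph_adj_iff.2 ⟨?_, i, s, rfl, rfl⟩)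
  cases s
  exacts [((pairEdge_injective_of_isTree hT).1 i).symm, (pairEdge_injective_of_isTree hT).1 i]

theorem IsIMC.two_le {G : SimpleGraph α} {a b : Fin (r - 1) → α} (h : IsIMC G part a b) :
    2 ≤ r := by
  obtain ⟨-, -, -, -, hcover, -, -, hT⟩ := h
  obtain ⟨q⟩ := hT.connected.nonempty
  obtain ⟨i, -⟩ := hcover q
  have := i.2
  omega

theorem IsIMC.isPrivateNeighbors_swap {G : SimpleGraph α} {a b : Fin (r - 1) → α}
    (h : IsIMC G part a b) : IsPrivateNeighbors G a b b a := by
  obtain ⟨hab, -, -, hI, -⟩ := h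
  intro i s j t
  have hne := fun i => (hab i).ne
  have hba := fun i => (hab i).symm
  cases s <;> cases t <;> simp only [pairEnd] <;> grind

end auxGraph

section IndependentTransversal

variable {r n : ℕ} {G : SimpleGraph (Fin r × Fin n)}

theorem hasIT_of_pairwise_not_adj (c : Fin r → Fin r × Fin n) (hc : ∀ q, (c q).1 = q)
    (h : ∀ q q', q ≠ q' → ¬G.Adj (c q) (c q')) : HasIT G := by
  have hcq (q : Fin r) : (q, (c q).2) = c q := Prod.ext (hc q).symm rfl
  exact ⟨fun q => (c q).2, fun q q' hqq' => by simpa only [hcq] using h q q' hqq'⟩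

/-- Rooting the tree at `t.1`, every other part takes the end lying in it of the pair that
joins it to its parent; `ht` says that `t` misses all these ends. -/
theorem hasIT_of_isTree_auxGraph {V W : Fin (r - 1) → Fin r × Fin n}
    (hT : (auxGraph Prod.fst V W).IsTree) (hc : CrossIndependent G V W) (t : Fin r × Fin n)
    (ht : ∀ j u, ((auxGraph Prod.fst V W).deleteEdges {pairEdge Prod.fst V W j}).Reachable
      (pairEnd V W j !u).1 t.1 → ¬G.Adj t (pairEnd V W j u)) :
    HasIT G := by
  have hparent : ∀ q, q ≠ t.1 → ∃ j u, (pairEnd V W j u).1 = q ∧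
      ((auxGraph Prod.fst V W).deleteEdges {pairEdge Prod.fst V W j}).Reachable
        (pairEnd V W j !u).1 t.1 := by
    intro q hq
    obtain ⟨p, hqp, hp⟩ := (hT.connected q t.1).exists_adj_reachable_deleteEdges hq
    obtain ⟨-, j, u, rfl, rfl⟩ := auxGraph_adj_iff.1 hqp
    exact ⟨j, u, rfl, by rwa [pairEdge_eq Prod.fst V W j u]⟩
  choose j u hju hreach using hparent
  let c q : Fin r × Fin n := if hq : q = t.1 then t else pairEnd V W (j q hq) (u q hq)
  have hroot : ∀ q (hq : q ≠ t.1), ¬G.Adj t (c q) := fun q hq => by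
    simpa [c, hq] using ht _ _ (hreach q hq)
  refine hasIT_of_pairwise_not_adj c (fun q => ?_) (fun q q' hqq' => ?_)
  · by_cases hq : q = t.1
    · simp [c, hq]
    · simpa [c, hq] using hju q hq
  by_cases hq : q = t.1
  · subst hq
    simpa [c] using hroot q' (Ne.symm hqq')
  by_cases hq' : q' = t.1
  · subst hq'
    exact fun h => hroot q hq (by simpa [c] using h.symm)
  simp only [c, dif_neg hq, dif_neg hq']
  by_cases hj : j q hq = j q' hq'
  · have hu : u q' hq' = !u q hq := by
      refine (Bool.eq_or_eq_not _ _).resolve_left fun hu => hqq' ?_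
      rw [← hju q hq, ← hju q' hq', hj, hu]
    have h1 := hreach q' hq'
    rw [← hj, hu, Bool.not_not] at h1
    exact fun _ => not_reachable_deleteEdges_pairEdge_of_isTree hT _ _ (h1.trans (hreach q hq).symm)
  · exact hc _ _ hj _ _

theorem reachable_deleteEdges_pairEdge_of_not_hasIT (hnoIT : ¬HasIT G)
    {V W : Fin (r - 1) → Fin r × Fin n} (hT : (auxGraph Prod.fst V W).IsTree)
    (hc : CrossIndependent G V W) {i : Fin (r - 1)} {s : Bool} {t : Fin r × Fin n}
    (ht : ∀ j ≠ i, ∀ u, ¬G.Adj t (pairEnd V W j u)) (hti : ¬G.Adj t (pairEnd V W i s)) :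
    ((auxGraph Prod.fst V W).deleteEdges {pairEdge Prod.fst V W i}).Reachable
      t.1 (pairEnd V W i s).1 := by
  by_contra hnot
  have hother := (hT.connected t.1 (pairEnd V W i s).1).reachable_deleteEdges_or
    (pairEnd V W i !s).1
  rw [← pairEdge_eq] at hother
  refine hnoIT (hasIT_of_isTree_auxGraph hT hc t fun j u hju => ?_)
  by_cases hj : j = i
  · subst hj
    rcases Bool.eq_or_eq_not u s with rfl | rfl
    · exact hti
    · rw [Bool.not_not] at hju
      exact absurd hju.symm hnot
  · exact ht j hj u

theorem isTree_auxGraph_of_exchange (hnoIT : ¬HasIT G) {V W V' W' : Fin (r - 1) → Fin r × Fin n}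
    {i : Fin (r - 1)} (hT : (auxGraph Prod.fst V W).IsTree)
    (hc : CrossIndependent G V W) (hc' : CrossIndependent G V' W')
    (hV : ∀ j ≠ i, V' j = V j) (hW : ∀ j ≠ i, W' j = W j)
    (hVi : ¬G.Adj (V' i) (V i)) (hWi : ¬G.Adj (W' i) (W i)) :
    (auxGraph Prod.fst V' W').IsTree := by
  set K := (auxGraph Prod.fst V W).deleteEdges {pairEdge Prod.fst V W i}
  have hend : ∀ j ≠ i, ∀ u, pairEnd V' W' j u = pairEnd V W j u := by
    intro j hj u
    cases u
    exacts [hW j hj, hV j hj]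
  have hnadj (s : Bool) : ∀ j ≠ i, ∀ u, ¬G.Adj (pairEnd V' W' i s) (pairEnd V W j u) :=
    fun j hj u => hend j hj u ▸ hc' i j (Ne.symm hj) s u
  have hVV' : K.Reachable (V' i).1 (V i).1 :=
    reachable_deleteEdges_pairEdge_of_not_hasIT (s := true) hnoIT hT hc (hnadj true) hVi
  have hWW' : K.Reachable (W' i).1 (W i).1 :=
    reachable_deleteEdges_pairEdge_of_not_hasIT (s := false) hnoIT hT hc (hnadj false) hWi
  have hsep : ¬K.Reachable (V' i).1 (W' i).1 := fun h =>
    not_reachable_deleteEdges_pairEdge_of_isTree hT i true ((hVV'.symm.trans h).trans hWW')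
  have hle : K ⊔ edge (V' i).1 (W' i).1 ≤ auxGraph Prod.fst V' W' := by
    refine sup_le (fun p q hpq => ?_) ((edge_le_iff _).2 (Or.inr ?_))
    · obtain ⟨hpq, hne⟩ := deleteEdges_adj.1 hpq
      obtain ⟨hpq, j, u, rfl, rfl⟩ := auxGraph_adj_iff.1 hpq
      have hj : j ≠ i := by
        rintro rfl
        exact hne (pairEdge_eq Prod.fst V W j u).symm
      exact auxGraph_adj_iff.2 ⟨hpq, j, u, by rw [hend j hj], by rw [hend j hj]⟩
    · exact auxGraph_adj_iff.2 ⟨fun h => hsep (h ▸ .refl _), i, true, rfl, rfl⟩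
  exact isTree_auxGraph_of_connected
    ((hT.isTree_deleteEdges_sup_edge hsep).connected.mono hle)

end IndependentTransversal

section InducedMatchingConfiguration

variable {r n : ℕ} {G : SimpleGraph (Fin r × Fin n)}

theorem isTree_auxGraph_of_isPrivateNeighbors (hnoIT : ¬HasIT G)
    {a b v w : Fin (r - 1) → Fin r × Fin n} (himc : IsIMC G Prod.fst a b)
    (hc : CrossIndependent G v w) (hvw : IsPrivateNeighbors G a b v w) :
    (auxGraph Prod.fst v w).IsTree := by
  have hba := himc.isPrivateNeighbors_swap
  obtain ⟨-, -, -, -, -, -, -, hTab⟩ := himc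
  suffices ∀ S : Finset (Fin (r - 1)),
      (auxGraph Prod.fst (S.piecewise v b) (S.piecewise w a)).IsTree by
    simpa using this Finset.univ
  intro S
  induction S using Finset.induction_on with
  | empty => simpa [auxGraph_comm] using hTab
  | insert i S hi ih =>
    refine isTree_auxGraph_of_exchange hnoIT (i := i) ih (hc.piecewise_swap S hvw hba)
      (hc.piecewise_swap _ hvw hba) (fun j hj => Finset.piecewise_insert_of_ne _ _ _ hj)
      (fun j hj => Finset.piecewise_insert_of_ne _ _ _ hj) ?_ ?_
    · rw [Finset.piecewise_insert_self, Finset.piecewise_eq_of_notMem _ _ _ hi]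
      exact fun h => absurd ((hvw i true i false).1 h).2 (by decide)
    · rw [Finset.piecewise_insert_self, Finset.piecewise_eq_of_notMem _ _ _ hi]
      exact fun h => absurd ((hvw i false i true).1 h).2 (by decide)

theorem isIMC_of_isTree_auxGraph (hnoIT : ¬HasIT G) (hr : 2 ≤ r)
    {v w : Fin (r - 1) → Fin r × Fin n} (hT : (auxGraph Prod.fst v w).IsTree)
    (hc : CrossIndependent G v w) (hinj : Injective (uncurry (pairEnd v w))) :
    IsIMC G Prod.fst v w := by
  have hadj : ∀ i, G.Adj (v i) (w i) := by
    intro i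
    by_contra hvw
    refine hnoIT (hasIT_of_isTree_auxGraph hT hc (w i) fun j u _ => ?_)
    by_cases hj : j = i
    · subst hj
      cases u
      exacts [G.irrefl, fun h => hvw h.symm]
    · exact hc i j (Ne.symm hj) false u
  have hdist : ∀ i j s t, pairEnd v w i s = pairEnd v w j t → i = j := fun i j s t h =>
    congrArg Prod.fst (@hinj (i, s) (j, t) h)
  have hpart := pairEdge_injective_of_isTree hT
  refine ⟨hadj, fun i => (hadj i).ne, fun i j hij => ⟨fun h => hij (hdist i j true true h),
    fun h => hij (hdist i j false false h), fun h => hij (hdist i j true false h)⟩,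
    fun i j x y hx hy hxy => ?_, fun q => ?_, hpart.1,
    fun i j hij h => hij (hpart.2 (Sym2.eq_iff.2 h)), hT⟩
  · have hij : i = j := by
      by_contra hij
      rcases hx with rfl | rfl <;> rcases hy with rfl | rfl
      exacts [hc i j hij true true hxy, hc i j hij true false hxy, hc i j hij false true hxy,
        hc i j hij false false hxy]
    subst hij
    refine ⟨rfl, ?_⟩
    rcases hx with rfl | rfl <;> rcases hy with rfl | rfl
    exacts [absurd hxy (G.irrefl), .inl ⟨rfl, rfl⟩, .inr ⟨rfl, rfl⟩, absurd hxy (G.irrefl)]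
  · have : Nontrivial (Fin r) := Fin.nontrivial_iff_two_le.2 hr
    obtain ⟨q', hq'⟩ := exists_ne q
    obtain ⟨p, hqp, -⟩ := (hT.connected q q').exists_adj_reachable_deleteEdges hq'.symm
    obtain ⟨-, i, s, hs, -⟩ := auxGraph_adj_iff.1 hqp
    cases s
    exacts [⟨i, .inr hs⟩, ⟨i, .inl hs⟩]

end InducedMatchingConfiguration

theorem stmt15_general (r n : ℕ) (G : SimpleGraph (Fin r × Fin n))
    (hnoIT : ¬ HasIT G)
    (a b : Fin (r - 1) → Fin r × Fin n) (himc : IsIMC G Prod.fst a b)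
    (v w : Fin (r - 1) → Fin r × Fin n)
    -- v i ∈ A_{a i} : the only neighbor of v i inside I = {a j, b j} is a i
    (hv : ∀ i, (∀ j, G.Adj (v i) (a j) ↔ j = i) ∧ (∀ j, ¬ G.Adj (v i) (b j)))
    -- w i ∈ A_{b i} : the only neighbor of w i inside I is b i
    (hw : ∀ i, (∀ j, G.Adj (w i) (b j) ↔ j = i) ∧ (∀ j, ¬ G.Adj (w i) (a j)))
    -- {v i, w i} is independent in G - E where E = {v i w i : i}
    (hind : ∀ i j, i ≠ j →
      ¬ G.Adj (v i) (v j) ∧ ¬ G.Adj (w i) (w j) ∧ ¬ G.Adj (v i) (w j)) :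
    IsIMC G Prod.fst v w := by
  have hc := crossIndependent_of_forall hind
  have hvw := isPrivateNeighbors_of_forall hv hw
  exact isIMC_of_isTree_auxGraph hnoIT himc.two_le
    (isTree_auxGraph_of_isPrivateNeighbors hnoIT himc hc hvw) hc hvw.injective

theorem stmt15 (r n : ℕ) (hr : 2 ≤ r) (G : SimpleGraph (Fin r × Fin n))
    (hpart : IsPartite G) (hnoIT : ¬ HasIT G)
    (a b : Fin (r - 1) → Fin r × Fin n) (himc : IsIMC G Prod.fst a b)
    (v w : Fin (r - 1) → Fin r × Fin n)
    -- v i ∈ A_{a i} : the only neighbor of v i inside I = {a j, b j} is a i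
    (hv : ∀ i, (∀ j, G.Adj (v i) (a j) ↔ j = i) ∧ (∀ j, ¬ G.Adj (v i) (b j)))
    -- w i ∈ A_{b i} : the only neighbor of w i inside I is b i
    (hw : ∀ i, (∀ j, G.Adj (w i) (b j) ↔ j = i) ∧ (∀ j, ¬ G.Adj (w i) (a j)))
    -- {v i, w i} is independent in G - E where E = {v i w i : i}
    (hind : ∀ i j, i ≠ j →
      ¬ G.Adj (v i) (v j) ∧ ¬ G.Adj (w i) (w j) ∧ ¬ G.Adj (v i) (w j)) :
    IsIMC G Prod.fst v w :=
  stmt15_general r n G hnoIT a b himc v w hv hw hind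
end

section
/- For all integers r ≥ 2 and s ≥ 2 there exists n₀ such that every r-uniform hypergraph on n ≥ n₀ vertices with at least n^{r − s^{1−r}} edges contains a copy of K_r^r(s); that is, there exist pairwise disjoint s-element vertex sets S_1, …, S_r such that every r-element set {x_1, …, x_r} with x_i ∈ S_i for each i is an edge of the hypergraph. -/
/-!
Erdős's argument. Order the edges: the injective tuples `x : Fin r → Fin n` whose image is an
edge form a set `T` of at least `r! · n ^ (r - s ^ (1 - r))` tuples, and a box
`S₀ × ⋯ × S_{r-1}` with sides of size `s` inside `T` is a copy of `K_r^r(s)` (its sides are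
disjoint because its tuples are injective). Boxes are found by induction on the dimension `m`.
Write each `x ∈ T` as `Fin.snoc y v`; by convexity of `d ↦ d.choose s`, some `s`-set `Q` of
last coordinates is completed by many `y` simultaneously, and these `y` form a set of
`(m-1)`-tuples that is again large enough for the induction hypothesis. The exponent
`m - s ^ (1 - m)` is exactly what this step preserves; the constant factor drops from `c` to
`(3c/4)^s`, which stays at least `s` as long as `c ≥ 2`.
-/

open Finset Filter
open scoped Nat

theorem sub_pow_le_card_pow_mul_sum_choose {ι : Type*} [Fintype ι] (f : ι → ℕ) {s : ℕ}
    (hs : 1 ≤ s) (hf : (s : ℝ) * Fintype.card ι ≤ ∑ i, (f i : ℝ)) :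
    (∑ i, (f i : ℝ) - s * Fintype.card ι) ^ s ≤
      (Fintype.card ι : ℝ) ^ (s - 1) * s ! * ∑ i, ((f i).choose s : ℝ) := by
  set g : ι → ℝ := fun i => ((f i + 1 - s : ℕ) : ℝ)
  have hg : ∑ i, (f i : ℝ) - s * Fintype.card ι ≤ ∑ i, g i := by
    rw [mul_comm, ← nsmul_eq_mul, ← card_univ, ← sum_const, ← sum_sub_distrib]
    gcongr with i
    have : ((f i + 1 : ℕ) : ℝ) ≤ g i + s := by
      simp only [g]
      exact_mod_cast le_tsub_add
    push_cast at this
    linarith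
  have hgs : ∀ i, g i ^ s ≤ s ! * ((f i).choose s : ℝ) := fun i =>
    (div_le_iff₀' (by positivity)).1 (Nat.pow_le_choose s (f i))
  obtain ⟨t, rfl⟩ : ∃ t, s = t + 1 := ⟨s - 1, by omega⟩
  calc (∑ i, (f i : ℝ) - (t + 1 : ℕ) * Fintype.card ι) ^ (t + 1)
      ≤ (∑ i, g i) ^ (t + 1) := pow_le_pow_left₀ (by linarith) hg _
    _ ≤ (Fintype.card ι : ℝ) ^ t * ∑ i, g i ^ (t + 1) :=
        pow_sum_le_card_mul_sum_pow (fun i _ => by positivity) t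
    _ ≤ (Fintype.card ι : ℝ) ^ t * ∑ i, (t + 1) ! * ((f i).choose (t + 1) : ℝ) := by
        gcongr with i
        exact hgs i
    _ = _ := by rw [← mul_sum, mul_assoc, Nat.add_sub_cancel]

section Box

variable {α : Type*} [Fintype α] [DecidableEq α] {m : ℕ}

def ContainsBox (s : ℕ) (T : Finset (Fin m → α)) : Prop :=
  ∃ S : Fin m → Finset α, (∀ i, #(S i) = s) ∧ Fintype.piFinset S ⊆ T

def snocLink (T : Finset (Fin (m + 1) → α)) (y : Fin m → α) : Finset α :=
  {v | Fin.snoc y v ∈ T}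

def commonSnocLink (T : Finset (Fin (m + 1) → α)) (Q : Finset α) : Finset (Fin m → α) :=
  {y | Q ⊆ snocLink T y}

theorem sum_card_snocLink (T : Finset (Fin (m + 1) → α)) :
    ∑ y, #(snocLink T y) = #T := by
  rw [card_eq_sum_card_fiberwise (f := Fin.init) (t := univ) fun _ _ => mem_univ _]
  refine sum_congr rfl fun y _ =>
    card_nbij' (Fin.snoc (α := fun _ => α) y) (· (Fin.last m)) ?_ ?_ ?_ ?_
  · intro v hv
    simpa [snocLink] using hv
  · intro x hx
    obtain ⟨hxT, rfl⟩ := mem_filter.1 hx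
    simpa [snocLink] using hxT
  · intro v _
    simp
  · intro x hx
    obtain ⟨-, rfl⟩ := mem_filter.1 hx
    simp

theorem sum_choose_card_snocLink (T : Finset (Fin (m + 1) → α)) (s : ℕ) :
    ∑ y, (#(snocLink T y)).choose s = ∑ Q ∈ powersetCard s univ, #(commonSnocLink T Q) := by
  calc ∑ y, (#(snocLink T y)).choose s
      = ∑ y, #((powersetCard s univ).bipartiteAbove (fun y Q => Q ⊆ snocLink T y) y) := by
        refine sum_congr rfl fun y _ => ?_
        rw [← card_powersetCard, bipartiteAbove, powersetCard_eq_filter, powersetCard_eq_filter,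
          filter_filter]
        congr 1
        ext Q
        simp [and_comm]
    _ = _ := sum_card_bipartiteAbove_eq_sum_card_bipartiteBelow _

theorem exists_sum_choose_le_choose_mul_card_commonSnocLink (T : Finset (Fin (m + 1) → α))
    {s : ℕ} (hs : s ≤ Fintype.card α) :
    ∃ Q : Finset α, #Q = s ∧
      ∑ y, (#(snocLink T y)).choose s ≤ (Fintype.card α).choose s * #(commonSnocLink T Q) := by
  obtain ⟨Q, hQ, hmax⟩ := exists_max_image (powersetCard s univ)
    (fun Q => #(commonSnocLink T Q)) (powersetCard_nonempty.2 (by simpa using hs))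
  refine ⟨Q, (mem_powersetCard.1 hQ).2, ?_⟩
  rw [sum_choose_card_snocLink]
  calc _ ≤ #(powersetCard s (univ : Finset α)) • #(commonSnocLink T Q) :=
        sum_le_card_nsmul _ _ _ hmax
    _ = _ := by simp

theorem ContainsBox.of_commonSnocLink {T : Finset (Fin (m + 1) → α)} {Q : Finset α} {s : ℕ}
    (hQ : #Q = s) (h : ContainsBox s (commonSnocLink T Q)) : ContainsBox s T := by
  obtain ⟨S, hS, hST⟩ := h
  refine ⟨Fin.snoc S Q, Fin.lastCases (by simpa) (by simpa), fun x hx => ?_⟩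
  rw [Fintype.mem_piFinset] at hx
  have hinit : Fin.init x ∈ commonSnocLink T Q :=
    hST (Fintype.mem_piFinset.2 fun i => by simpa [Fin.init] using hx i.castSucc)
  have hlast := mem_filter.1 ((mem_filter.1 hinit).2 (by simpa using hx (Fin.last m)))
  rw [← Fin.snoc_init_self x]
  exact hlast.2

theorem exists_sub_pow_le_mul_card_commonSnocLink (T : Finset (Fin (m + 1) → α)) {s : ℕ}
    (hs : 1 ≤ s) (hsn : s ≤ Fintype.card α)
    (hT : (s : ℝ) * (Fintype.card α : ℝ) ^ m ≤ #T) :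
    ∃ Q : Finset α, #Q = s ∧
      ((#T : ℝ) - s * (Fintype.card α : ℝ) ^ m) ^ s ≤
        ((Fintype.card α : ℝ) ^ m) ^ (s - 1) * (Fintype.card α : ℝ) ^ s *
          #(commonSnocLink T Q) := by
  set n := Fintype.card α
  obtain ⟨Q, hQ, hsum⟩ := exists_sum_choose_le_choose_mul_card_commonSnocLink T hsn
  refine ⟨Q, hQ, ?_⟩
  have hcard : (Fintype.card (Fin m → α) : ℝ) = (n : ℝ) ^ m := by simp [n]
  have hdeg : ∑ y, (#(snocLink T y) : ℝ) = #T := by exact_mod_cast sum_card_snocLink T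
  have hconv := sub_pow_le_card_pow_mul_sum_choose (fun y => #(snocLink T y)) hs
    (by rwa [hcard, hdeg])
  rw [hcard, hdeg] at hconv
  have hchoose : (s ! : ℝ) * n.choose s ≤ (n : ℝ) ^ s := by
    rw [← le_div_iff₀' (by positivity)]
    exact Nat.choose_le_pow_div s n
  calc _ ≤ _ := hconv
    _ ≤ ((n : ℝ) ^ m) ^ (s - 1) * s ! * (n.choose s * #(commonSnocLink T Q)) := by
        gcongr
        exact_mod_cast hsum
    _ = ((n : ℝ) ^ m) ^ (s - 1) * (s ! * n.choose s) * #(commonSnocLink T Q) := by ring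
    _ ≤ _ := by gcongr

end Box

def EventuallyContainsBox (s m : ℕ) (c : ℝ) : Prop :=
  ∀ᶠ n : ℕ in atTop, ∀ T : Finset (Fin m → Fin n),
    c * (n : ℝ) ^ ((m : ℝ) - (s : ℝ) ^ ((1 : ℝ) - m)) ≤ #T → ContainsBox s T

theorem eventuallyContainsBox_one {s : ℕ} {c : ℝ} (hc : (s : ℝ) ≤ c) :
    EventuallyContainsBox s 1 c := by
  refine Eventually.of_forall fun n T hT => ?_
  have hinj : Function.Injective fun x : Fin 1 → Fin n => x 0 :=
    (Equiv.funUnique (Fin 1) _).injective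
  obtain ⟨S, hST, hS⟩ := exists_subset_card_eq (s := T.image (· 0)) (n := s) (by
    rw [card_image_of_injective _ hinj]
    norm_num at hT
    exact_mod_cast hc.trans hT)
  refine ⟨fun _ => S, fun _ => hS, fun x hx => ?_⟩
  obtain ⟨y, hy, hyx⟩ := mem_image.1 (hST (Fintype.mem_piFinset.1 hx 0))
  rwa [← hinj hyx]

theorem EventuallyContainsBox.succ {s m : ℕ} {c : ℝ} (hs : 2 ≤ s) (hm : 1 ≤ m) (hc : 0 < c)
    (h : EventuallyContainsBox s m ((3 * c / 4) ^ s)) : EventuallyContainsBox s (m + 1) c := by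
  set δ : ℝ := (s : ℝ) ^ (-(m : ℝ))
  have hδ : δ < 1 := Real.rpow_lt_one_of_one_lt_of_neg (by exact_mod_cast hs)
    (by simp only [neg_lt_zero, Nat.cast_pos]; omega)
  -- `1 - δ > 0`, so for large `n` the loss `s * n ^ m` is at most `c / 4 * n ^ (m + 1 - δ)`.
  have hlarge : ∀ᶠ n : ℕ in atTop, 4 * s / c ≤ (n : ℝ) ^ (1 - δ) :=
    ((tendsto_rpow_atTop (by linarith)).comp tendsto_natCast_atTop_atTop).eventually_ge_atTop _
  filter_upwards [h, hlarge, eventually_ge_atTop s, eventually_gt_atTop 0]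
    with n hbox hlarge hsn hn T hT
  have hn' : (0 : ℝ) < n := by exact_mod_cast hn
  have hexp : ((m + 1 : ℕ) : ℝ) - (s : ℝ) ^ ((1 : ℝ) - (m + 1 : ℕ)) = m + 1 - δ := by
    simp only [δ]
    push_cast
    ring_nf
  rw [hexp] at hT
  have hsplit : (n : ℝ) ^ ((m : ℝ) + 1 - δ) = n ^ (1 - δ) * n ^ m := by
    rw [← Real.rpow_natCast, ← Real.rpow_add hn']
    ring_nf
  have hsN : (s : ℝ) * n ^ m ≤ c / 4 * n ^ ((m : ℝ) + 1 - δ) := by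
    rw [hsplit, ← mul_assoc]
    gcongr
    rwa [← div_le_iff₀' (by positivity), div_div_eq_mul_div, mul_comm]
  have hpow : ((n : ℝ) ^ ((m : ℝ) + 1 - δ)) ^ s =
      (n : ℝ) ^ ((m : ℝ) - s ^ ((1 : ℝ) - m)) *
        (((n : ℝ) ^ m) ^ (s - 1) * (n : ℝ) ^ s) := by
    have hδs : δ * s = (s : ℝ) ^ ((1 : ℝ) - m) := by
      rw [← Real.rpow_add_one (by positivity), neg_add_eq_sub]
    rw [← Real.rpow_mul_natCast hn'.le, ← pow_mul, ← pow_add, ← Real.rpow_natCast,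
      ← Real.rpow_add hn']
    congr 1
    push_cast [Nat.cast_sub (by omega : 1 ≤ s)]
    linear_combination -hδs
  obtain ⟨Q, hQ, hG⟩ :=
    exists_sub_pow_le_mul_card_commonSnocLink T (s := s) (by omega) (by simpa)
    (by simp only [Fintype.card_fin]; nlinarith)
  refine ContainsBox.of_commonSnocLink hQ (hbox _ ?_)
  simp only [Fintype.card_fin] at hG
  have hmain : (3 * c / 4 * (n : ℝ) ^ ((m : ℝ) + 1 - δ)) ^ s ≤
      ((n : ℝ) ^ m) ^ (s - 1) * (n : ℝ) ^ s * #(commonSnocLink T Q) :=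
    (pow_le_pow_left₀ (by positivity) (by linarith) s).trans hG
  rw [mul_pow, hpow, ← mul_assoc, mul_comm _ (#(commonSnocLink T Q) : ℝ)] at hmain
  exact le_of_mul_le_mul_right hmain (by positivity)

theorem le_three_halves_pow {s : ℕ} (hs : 2 ≤ s) : (s : ℝ) ≤ (3 / 2) ^ s := by
  induction s, hs using Nat.le_induction with
  | base => norm_num
  | succ s hs ih =>
    have : (2 : ℝ) ≤ s := by exact_mod_cast hs
    rw [pow_succ]
    push_cast
    nlinarith

theorem eventuallyContainsBox {s m : ℕ} {c : ℝ} (hs : 2 ≤ s) (hm : 2 ≤ m) (hc : 2 ≤ c) :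
    EventuallyContainsBox s m c := by
  have hstep : ∀ c : ℝ, 2 ≤ c → (s : ℝ) ≤ (3 * c / 4) ^ s := fun c hc =>
    (le_three_halves_pow hs).trans (pow_le_pow_left₀ (by norm_num) (by linarith) s)
  have hs' : (2 : ℝ) ≤ s := by exact_mod_cast hs
  induction m, hm using Nat.le_induction generalizing c with
  | base => exact (eventuallyContainsBox_one (hstep c hc)).succ hs le_rfl (by positivity)
  | succ m hm ih =>
    exact (ih (hs'.trans (hstep c hc))).succ hs (by omega) (by positivity)

theorem disjoint_of_forall_mem_piFinset_injective {ι α : Type*} [Fintype ι] [DecidableEq ι]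
    {S : ι → Finset α} (hne : ∀ i, (S i).Nonempty)
    (hinj : ∀ x ∈ Fintype.piFinset S, Function.Injective x) {i j : ι} (hij : i ≠ j) :
    Disjoint (S i) (S j) := by
  rw [disjoint_left]
  intro a hai haj
  obtain ⟨x, hx⟩ := Fintype.piFinset_nonempty.2 hne
  have hy : Function.update (Function.update x i a) j a ∈ Fintype.piFinset S := by
    rw [Fintype.mem_piFinset] at hx ⊢
    intro k
    rcases eq_or_ne k j with rfl | hkj
    · simpa
    rcases eq_or_ne k i with rfl | hki
    · simpa [hkj]
    · simpa [hkj, hki] using hx k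
  exact hij (hinj _ hy (by simp [hij]))

section Hypergraph

variable {α : Type*} [Fintype α] [DecidableEq α]

theorem factorial_le_card_injective_image_eq {r : ℕ} {e : Finset α} (he : #e = r) :
    r ! ≤ #{x : Fin r → α | Function.Injective x ∧ image x univ = e} := by
  set f : Fin r → α := fun i => (Fintype.equivFinOfCardEq ((Fintype.card_coe e).trans he)).symm i
  have hf : Function.Injective f := Subtype.val_injective.comp (Equiv.injective _)
  have hfe : image f univ = e := by
    refine eq_of_subset_of_card_le (fun a ha => ?_) ?_
    · obtain ⟨i, -, rfl⟩ := mem_image.1 ha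
      exact Subtype.prop _
    · rw [card_image_of_injective _ hf, card_univ, Fintype.card_fin, he]
  calc r ! = #(univ : Finset (Equiv.Perm (Fin r))) := by simp [Fintype.card_perm]
    _ ≤ _ := by
      refine card_le_card_of_injOn (fun σ => f ∘ σ) (fun σ _ => ?_) (fun σ _ τ _ h => ?_)
      · refine mem_filter.2 ⟨mem_univ _, hf.comp σ.injective, ?_⟩
        rw [image_comp, image_univ_equiv, hfe]
      · exact Equiv.ext fun i => hf (congrFun h i)

theorem factorial_mul_card_le_card_injective_image_mem {r : ℕ} (E : Finset (Finset α))
    (hE : ∀ e ∈ E, #e = r) :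
    r ! * #E ≤ #{x : Fin r → α | Function.Injective x ∧ image x univ ∈ E} := by
  set T : Finset (Fin r → α) := {x | Function.Injective x ∧ image x univ ∈ E}
  rw [card_eq_sum_card_fiberwise (f := (image · univ)) (t := E) fun x hx => (mem_filter.1 hx).2.2,
    mul_comm, ← smul_eq_mul, ← sum_const]
  refine sum_le_sum fun e he => (factorial_le_card_injective_image_eq (hE e he)).trans ?_
  refine card_le_card fun x hx => ?_
  obtain ⟨hinj, rfl⟩ := (mem_filter.1 hx).2
  simp [T, hinj, he]

end Hypergraph

theorem stmt17 (r s : ℕ) (hr : 2 ≤ r) (hs : 2 ≤ s) :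
    ∃ n₀ : ℕ, ∀ n : ℕ, n₀ ≤ n →
      -- E is an r-uniform hypergraph on n vertices
      ∀ E : Set (Finset (Fin n)), (∀ e ∈ E, e.card = r) →
        -- with at least n^(r - s^(1-r)) edges
        (n : ℝ) ^ ((r : ℝ) - (s : ℝ) ^ ((1 : ℝ) - (r : ℝ))) ≤ (E.ncard : ℝ) →
        -- it contains a copy of K_r^r(s)
        ∃ S : Fin r → Finset (Fin n),
          (∀ i, (S i).card = s) ∧
          (∀ i j, i ≠ j → Disjoint (S i) (S j)) ∧
          ∀ x : Fin r → Fin n, (∀ i, x i ∈ S i) → Finset.image x Finset.univ ∈ E := by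
  classical
  obtain ⟨n₀, hn₀⟩ := eventually_atTop.1 (eventuallyContainsBox (c := (r ! : ℝ)) hs hr
    (by exact_mod_cast hr.trans (Nat.self_le_factorial r)))
  refine ⟨n₀, fun n hn E hE hcard => ?_⟩
  set T : Finset (Fin r → Fin n) := {x | Function.Injective x ∧ image x univ ∈ E.toFinset}
  have hT : (r ! : ℝ) * n ^ ((r : ℝ) - (s : ℝ) ^ ((1 : ℝ) - r)) ≤ #T :=
    calc _ ≤ (r ! : ℝ) * E.ncard := by gcongr
      _ ≤ #T := by
        rw [Set.ncard_eq_toFinset_card']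
        exact_mod_cast factorial_mul_card_le_card_injective_image_mem _ (by simpa using hE)
  obtain ⟨S, hS, hST⟩ := hn₀ n hn T hT
  have hbox : ∀ x ∈ Fintype.piFinset S, Function.Injective x ∧ image x univ ∈ E.toFinset :=
    fun x hx => (mem_filter.1 (hST hx)).2
  have hne : ∀ i, (S i).Nonempty := fun i => card_pos.1 (by rw [hS i]; omega)
  exact ⟨S, hS, fun i j =>
    disjoint_of_forall_mem_piFinset_injective hne (fun x hx => (hbox x hx).1),
    fun x hx => Set.mem_toFinset.1 (hbox x (Fintype.mem_piFinset.2 hx)).2⟩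
end

section
/- Let n, k, q be natural numbers and let α be a real number with 2q/k ≤ α ≤ 1. If A_1, …, A_k are subsets of [n] = {1, …, n} such that (1/k)·Σ_{i=1}^{k} |A_i| ≥ αn, then there exist q distinct indices i_1, …, i_q ∈ [k] such that |A_{i_1} ∩ ⋯ ∩ A_{i_q}| ≥ (α/2)^q · n. -/
/-!
Let `d x` be the number of sets containing `x`. Counting pairs (injective `q`-tuple of indices,
point lying in all the sets it selects) gives `∑ₑ |⋂ⱼ A (e j)| = ∑ₓ d x (d x - 1) ⋯ (d x - q + 1)`.
Each term is at least `(d x - q + 1)₊ ^ q`, so by the power mean inequality the sum is at least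
`n (∑ d / n - q + 1) ^ q ≥ n (α k / 2) ^ q`, because `∑ d ≥ α k n` and `q ≤ α k / 2`. As there
are at most `k ^ q` tuples, one of them has an intersection of size at least `(α / 2) ^ q n`.
-/

open Finset Fintype

lemma card_embedding_forall_mem {ι : Type*} [Fintype ι] (q : ℕ) (p : ι → Prop)
    [DecidablePred p] :
    #{e : Fin q ↪ ι | ∀ j, p (e j)} = (#{i | p i}).descFactorial q := by
  rw [← Fintype.card_subtype]
  refine (Fintype.card_congr (Equiv.codRestrict (Fin q) {i | p i})).trans ?_
  simp [Fintype.card_subtype]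

lemma card_mul_pow_le_sum_descFactorial {α : Type*} [Fintype α] (d : α → ℕ) (q : ℕ) {s : ℝ}
    (hs : 0 ≤ s) (hd : card α * (s + q - 1) ≤ ∑ x, (d x : ℝ)) :
    card α * s ^ q ≤ ∑ x, ((d x).descFactorial q : ℝ) := by
  obtain _ | m := q
  · simp
  rcases (card α).eq_zero_or_pos with h0 | hpos
  · rw [h0, Nat.cast_zero, zero_mul]; positivity
  set g : α → ℝ := fun x => ((d x - m : ℕ) : ℝ)
  have hg : card α * s ≤ ∑ x, g x :=
    calc (card α : ℝ) * s ≤ ∑ x, ((d x : ℝ) - m) := by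
          rw [sum_sub_distrib, sum_const, card_univ, nsmul_eq_mul]; push_cast at hd; linarith
      _ ≤ ∑ x, g x := sum_le_sum fun x _ => by
          rcases le_total m (d x) with h | h
          · simp [g, Nat.cast_sub h]
          · simp [g, Nat.sub_eq_zero_of_le h, (Nat.cast_le (α := ℝ)).2 h]
  have hgq (x : α) : g x ^ (m + 1) ≤ (d x).descFactorial (m + 1) := by
    have := Nat.pow_sub_le_descFactorial (d x) (m + 1)
    rw [Nat.add_sub_add_right] at this
    simp only [g]
    exact_mod_cast this
  refine le_of_mul_le_mul_left ?_ (pow_pos (Nat.cast_pos.2 hpos) m)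
  calc (card α : ℝ) ^ m * (card α * s ^ (m + 1)) = (card α * s) ^ (m + 1) := by ring
    _ ≤ (∑ x, g x) ^ (m + 1) := by gcongr
    _ ≤ card α ^ m * ∑ x, g x ^ (m + 1) := pow_sum_le_card_mul_sum_pow (fun x _ => by positivity) m
    _ ≤ card α ^ m * ∑ x, ((d x).descFactorial (m + 1) : ℝ) := by gcongr with x; exact hgq x

section SetFamily

variable {ι α : Type*} [Fintype ι] [Fintype α] [DecidableEq α]

lemma sum_card_eq_sum_card_filter_mem (A : ι → Finset α) :
    ∑ i, #(A i) = ∑ x, #{i | x ∈ A i} := by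
  simpa [bipartiteAbove, bipartiteBelow] using
    sum_card_bipartiteAbove_eq_sum_card_bipartiteBelow (fun i x => x ∈ A i) (s := univ) (t := univ)

lemma sum_card_inter_eq_sum_descFactorial (A : ι → Finset α) (q : ℕ) :
    ∑ e : Fin q ↪ ι, #{x | ∀ j, x ∈ A (e j)} = ∑ x, (#{i | x ∈ A i}).descFactorial q := by
  have := sum_card_bipartiteAbove_eq_sum_card_bipartiteBelow
    (fun (e : Fin q ↪ ι) x => ∀ j, x ∈ A (e j)) (s := univ) (t := univ)
  simp only [bipartiteAbove, bipartiteBelow] at this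
  rw [this]
  exact sum_congr rfl fun x _ => card_embedding_forall_mem q (fun i => x ∈ A i)

theorem exists_embedding_card_mul_pow_le_card_inter (A : ι → Finset α) {q : ℕ}
    (hq : q ≤ card ι) {s : ℝ} (hs : 0 ≤ s) (hA : card α * (s + q - 1) ≤ ∑ i, (#(A i) : ℝ)) :
    ∃ e : Fin q ↪ ι,
      card α * s ^ q ≤ (card ι).descFactorial q * #{x | ∀ j, x ∈ A (e j)} := by
  have : Nonempty (Fin q ↪ ι) := Function.Embedding.nonempty_of_card_le (by simpa using hq)
  have hdeg : card α * s ^ q ≤ ∑ x, ((#{i | x ∈ A i}).descFactorial q : ℝ) :=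
    card_mul_pow_le_sum_descFactorial _ q hs (by
      rw [← Nat.cast_sum, ← sum_card_eq_sum_card_filter_mem, Nat.cast_sum]; exact hA)
  have hsum : ∑ _e : Fin q ↪ ι, card α * s ^ q
      ≤ ∑ e : Fin q ↪ ι, ((card ι).descFactorial q * #{x | ∀ j, x ∈ A (e j)} : ℝ) := by
    rw [sum_const, card_univ, card_embedding_eq, Fintype.card_fin, nsmul_eq_mul, ← mul_sum]
    gcongr
    rwa [← Nat.cast_sum, sum_card_inter_eq_sum_descFactorial, Nat.cast_sum]
  obtain ⟨e, -, he⟩ := exists_le_of_sum_le univ_nonempty hsum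
  exact ⟨e, he⟩

end SetFamily

theorem stmt18 (n k q : ℕ) (hk : 0 < k) (α : ℝ)
    (hα₁ : 2 * (q : ℝ) / (k : ℝ) ≤ α) (hα₂ : α ≤ 1)
    (A : Fin k → Finset (Fin n))
    (havg : α * (n : ℝ) ≤ (1 / (k : ℝ)) * ∑ i, ((A i).card : ℝ)) :
    ∃ idx : Fin q → Fin k, Function.Injective idx ∧
      (α / 2) ^ q * (n : ℝ) ≤ (((⋂ j, ((A (idx j) : Set (Fin n))))).ncard : ℝ) := by
  have hk' : (0 : ℝ) < k := Nat.cast_pos.2 hk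
  have hqα : 2 * (q : ℝ) ≤ α * k := (div_le_iff₀ hk').1 hα₁
  have hqk : q ≤ k := by exact_mod_cast (by nlinarith : (q : ℝ) ≤ k)
  have hsum : α * k * n ≤ ∑ i, (#(A i) : ℝ) := by
    rw [one_div, inv_mul_eq_div, le_div_iff₀ hk'] at havg; linarith
  obtain ⟨e, he⟩ := exists_embedding_card_mul_pow_le_card_inter A (s := α * k / 2)
    (by simpa using hqk) (by nlinarith) (by simp only [Fintype.card_fin]; nlinarith)
  refine ⟨e, e.injective, ?_⟩
  have hinter : (⋂ j, (A (e j) : Set (Fin n))) = ↑({x | ∀ j, x ∈ A (e j)} : Finset (Fin n)) := by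
    ext; simp
  rw [hinter, Set.ncard_coe_finset]
  refine le_of_mul_le_mul_left ?_ (pow_pos hk' q)
  calc (k : ℝ) ^ q * ((α / 2) ^ q * n) = n * (α * k / 2) ^ q := by ring
    _ ≤ k.descFactorial q * #{x | ∀ j, x ∈ A (e j)} := by simpa using he
    _ ≤ k ^ q * #{x | ∀ j, x ∈ A (e j)} := by
        gcongr; exact_mod_cast Nat.descFactorial_le_pow k q
end

section
/- For all positive integers n and s ≥ 2, the Zarankiewicz number satisfies z(n; s) ≤ (s−1)^{1/s}·n^{2−1/s} + s·n; that is, every bipartite graph with parts of size n and more than (s−1)^{1/s}·n^{2−1/s} + s·n edges contains a K_{s,s}. -/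
open Finset

theorem ncard_setOf_rel_eq_sum_card {α β : Type*} [Fintype α] [Fintype β]
    (R : α → β → Prop) [DecidableRel R] :
    {p : α × β | R p.1 p.2}.ncard = ∑ a, #{b | R a b} := by
  rw [Set.ncard_eq_toFinset_card', Set.toFinset_ofPred, card_filter, Fintype.sum_prod_type]
  simp only [card_filter]

theorem sum_choose_card_filter_le {α β : Type*} [Fintype α] [Fintype β] [DecidableEq β]
    (R : α → β → Prop) [DecidableRel R] {s t : ℕ}
    (h : ∀ T : Finset β, #T = s → #{a | T ⊆ univ.filter (R a)} ≤ t) :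
    ∑ a, (#{b | R a b}).choose s ≤ t * (Fintype.card β).choose s := by
  set r : α → Finset β → Prop := fun a T => T ⊆ univ.filter (R a)
  have hchoose (a : α) :
      (#{b | R a b}).choose s = #((powersetCard s univ).bipartiteAbove r a) := by
    rw [← card_powersetCard]
    congr 1
    ext T
    simp [r, mem_bipartiteAbove, mem_powersetCard, subset_iff, and_comm]
  calc ∑ a, (#{b | R a b}).choose s
      = ∑ T ∈ powersetCard s univ, #(univ.bipartiteBelow r T) := by
        simp_rw [hchoose]
        exact sum_card_bipartiteAbove_eq_sum_card_bipartiteBelow r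
    _ ≤ ∑ _T ∈ powersetCard s univ, t :=
        sum_le_sum fun T hT => h T (mem_powersetCard.1 hT).2
    _ = t * (Fintype.card β).choose s := by simp [mul_comm]

theorem KssFree.card_commonNeighbors_lt {n s : ℕ} {R : Fin n → Fin n → Prop} [DecidableRel R]
    (hR : KssFree s R) (T : Finset (Fin n)) (hT : #T = s) :
    #{a | T ⊆ univ.filter (R a)} < s := by
  by_contra! hle
  obtain ⟨S, hST, hS⟩ := exists_subset_card_eq hle
  exact hR ⟨S, T, hS, hT, fun a ha b hb => (mem_filter.1 ((mem_filter.1 (hST ha)).2 hb)).2⟩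

theorem sum_pow_sub_le_of_sum_choose_le {ι : Type*} (u : Finset ι) (d : ι → ℕ) {s t m : ℕ}
    (h : ∑ i ∈ u, (d i).choose s ≤ t * m.choose s) :
    ∑ i ∈ u, (d i + 1 - s) ^ s ≤ t * m ^ s :=
  calc ∑ i ∈ u, (d i + 1 - s) ^ s
      ≤ ∑ i ∈ u, s.factorial * (d i).choose s := sum_le_sum fun i _ => by
        rw [← Nat.descFactorial_eq_factorial_mul_choose]
        exact Nat.pow_sub_le_descFactorial _ _
    _ = s.factorial * ∑ i ∈ u, (d i).choose s := (mul_sum ..).symm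
    _ ≤ s.factorial * (t * m.choose s) := by gcongr
    _ = t * m.descFactorial s := by rw [Nat.descFactorial_eq_factorial_mul_choose]; ring
    _ ≤ t * m ^ s := by gcongr; exact Nat.descFactorial_le_pow _ _

theorem sum_le_of_sum_pow_le {ι : Type*} (u : Finset ι) {f : ι → ℝ} (hf : ∀ i ∈ u, 0 ≤ f i)
    {s : ℕ} (hs : s ≠ 0) {c : ℝ} (hc : 0 ≤ c) (h : ∑ i ∈ u, f i ^ s ≤ c * (#u : ℝ) ^ s) :
    ∑ i ∈ u, f i ≤ c ^ (1 / s : ℝ) * (#u : ℝ) ^ (2 - 1 / s : ℝ) := by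
  obtain ⟨k, rfl⟩ := Nat.exists_eq_succ_of_ne_zero hs
  set n : ℝ := ((#u : ℕ) : ℝ)
  have hbound_pow : (c ^ (1 / (k + 1 : ℕ) : ℝ) * n ^ (2 - 1 / (k + 1 : ℕ) : ℝ)) ^ (k + 1)
      = n ^ k * (c * n ^ (k + 1)) := by
    have hexp : (2 - ((k + 1 : ℕ) : ℝ)⁻¹) * (k + 1 : ℕ) = (k + (k + 1) : ℕ) := by
      push_cast; field_simp; ring
    rw [mul_pow, one_div, Real.rpow_inv_natCast_pow hc (Nat.succ_ne_zero k),
      ← Real.rpow_mul_natCast (Nat.cast_nonneg _), hexp, Real.rpow_natCast, pow_add]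
    ring
  refine (pow_le_pow_iff_left₀ (sum_nonneg hf) (by positivity) (Nat.succ_ne_zero k)).1 ?_
  calc (∑ i ∈ u, f i) ^ (k + 1) ≤ n ^ k * ∑ i ∈ u, f i ^ (k + 1) :=
        pow_sum_le_card_mul_sum_pow hf k
    _ ≤ n ^ k * (c * n ^ (k + 1)) := by gcongr
    _ = _ := hbound_pow.symm

theorem KssFree.ncard_le {n s : ℕ} (hs : s ≠ 0) {R : Fin n → Fin n → Prop} (hR : KssFree s R) :
    ({p : Fin n × Fin n | R p.1 p.2}.ncard : ℝ) ≤
      ((s : ℝ) - 1) ^ (1 / s : ℝ) * (n : ℝ) ^ (2 - 1 / s : ℝ) + (s - 1) * n := by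
  classical
  set d : Fin n → ℕ := fun a => #{b | R a b}
  have hpow : ∑ a, (d a + 1 - s) ^ s ≤ (s - 1) * n ^ s := by
    simpa using sum_pow_sub_le_of_sum_choose_le univ d <| sum_choose_card_filter_le R
      fun T hT => Nat.le_sub_one_of_lt (hR.card_commonNeighbors_lt T hT)
  have hcast : ((s - 1 : ℕ) : ℝ) = s - 1 := by rw [Nat.cast_sub (by omega)]; simp
  have hpow_real :
      ∑ a, ((d a + 1 - s : ℕ) : ℝ) ^ s ≤ ((s : ℝ) - 1) * (#(univ : Finset (Fin n)) : ℝ) ^ s := by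
    rw [← hcast, card_univ, Fintype.card_fin]; exact_mod_cast hpow
  have hroot : ∑ a, ((d a + 1 - s : ℕ) : ℝ) ≤
      ((s : ℝ) - 1) ^ (1 / s : ℝ) * (n : ℝ) ^ (2 - 1 / s : ℝ) := by
    simpa using sum_le_of_sum_pow_le univ (fun a _ => Nat.cast_nonneg _) hs
      (by rw [← hcast]; positivity) hpow_real
  have hsplit : ∑ a, d a ≤ ∑ a, (d a + 1 - s) + (s - 1) * n := by
    calc ∑ a, d a ≤ ∑ a, ((d a + 1 - s) + (s - 1)) := sum_le_sum fun a _ => by omega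
      _ = _ := by simp [sum_add_distrib, mul_comm]
  rw [ncard_setOf_rel_eq_sum_card]
  calc ((∑ a, d a : ℕ) : ℝ) ≤ ∑ a, ((d a + 1 - s : ℕ) : ℝ) + (s - 1) * n := by
        rw [← hcast]; exact_mod_cast hsplit
    _ ≤ _ := by gcongr

theorem exists_kssFree_zar_eq_ncard (n : ℕ) {s : ℕ} (hs : s ≠ 0) :
    ∃ R : Fin n → Fin n → Prop, KssFree s R ∧ zar n s = {p : Fin n × Fin n | R p.1 p.2}.ncard := by
  rw [zar]
  refine Nat.sSup_mem (s := {e | ∃ R : Fin n → Fin n → Prop, KssFree s R ∧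
    e = {p : Fin n × Fin n | R p.1 p.2}.ncard}) ⟨_, fun _ _ => False, ?_, rfl⟩
    ⟨Fintype.card (Fin n × Fin n), ?_⟩
  · rintro ⟨S, T, hS, hT, hST⟩
    obtain ⟨a, ha⟩ := card_pos.1 (hS ▸ Nat.pos_of_ne_zero hs)
    obtain ⟨b, hb⟩ := card_pos.1 (hT ▸ Nat.pos_of_ne_zero hs)
    exact hST a ha b hb
  · rintro _ ⟨R, -, rfl⟩
    simpa using Set.ncard_le_ncard (Set.subset_univ {p : Fin n × Fin n | R p.1 p.2})

theorem stmt19_general (n s : ℕ) (hs : 2 ≤ s) :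
    -- the Kővári–Sós–Turán bound z(n; s) ≤ (s-1)^{1/s} n^{2-1/s} + s n,
    (zar n s : ℝ) ≤
      ((s : ℝ) - 1) ^ ((1 : ℝ) / (s : ℝ)) * (n : ℝ) ^ ((2 : ℝ) - 1 / (s : ℝ)) + s * n ∧
    -- that is, every bipartite graph with parts of size n and more edges contains K_{s,s}
    ∀ R : Fin n → Fin n → Prop,
      ((s : ℝ) - 1) ^ ((1 : ℝ) / (s : ℝ)) * (n : ℝ) ^ ((2 : ℝ) - 1 / (s : ℝ)) + s * n
          < (({p : Fin n × Fin n | R p.1 p.2}).ncard : ℝ) →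
        ∃ S T : Finset (Fin n), S.card = s ∧ T.card = s ∧ ∀ a ∈ S, ∀ b ∈ T, R a b := by
  have hs0 : s ≠ 0 := by omega
  have hbound (R : Fin n → Fin n → Prop) (hR : KssFree s R) :
      ({p : Fin n × Fin n | R p.1 p.2}.ncard : ℝ) ≤
        ((s : ℝ) - 1) ^ ((1 : ℝ) / (s : ℝ)) * (n : ℝ) ^ ((2 : ℝ) - 1 / (s : ℝ)) + s * n :=
    (hR.ncard_le hs0).trans (by gcongr; linarith)
  refine ⟨?_, fun R hlt => ?_⟩
  · obtain ⟨R, hR, hzar⟩ := exists_kssFree_zar_eq_ncard n hs0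
    exact hzar ▸ hbound R hR
  · by_contra hR
    exact (hbound R hR).not_gt hlt

theorem stmt19 (n s : ℕ) (hn : 0 < n) (hs : 2 ≤ s) :
    -- the Kővári–Sós–Turán bound z(n; s) ≤ (s-1)^{1/s} n^{2-1/s} + s n,
    (zar n s : ℝ) ≤
      ((s : ℝ) - 1) ^ ((1 : ℝ) / (s : ℝ)) * (n : ℝ) ^ ((2 : ℝ) - 1 / (s : ℝ)) + s * n ∧
    -- that is, every bipartite graph with parts of size n and more edges contains K_{s,s}
    ∀ R : Fin n → Fin n → Prop,
      ((s : ℝ) - 1) ^ ((1 : ℝ) / (s : ℝ)) * (n : ℝ) ^ ((2 : ℝ) - 1 / (s : ℝ)) + s * n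
          < (({p : Fin n × Fin n | R p.1 p.2}).ncard : ℝ) →
        ∃ S T : Finset (Fin n), S.card = s ∧ T.card = s ∧ ∀ a ∈ S, ∀ b ∈ T, R a b :=
  stmt19_general n s hs
end
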